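/- arXiv:2307.11992 — 14 statements merged into one kernel-verified Lean document; each statement's English description precedes it below -/
import Mathlib

section
/- If a topological space X has a point x possessing a countable neighborhood basis (in particular, if X is nonempty and first countable), then X is not selectively highly divergent. -/
open Filter Topology

/-- A topological space `X` is *selectively highly divergent* (SHD) if for every sequence
`(U n)` of nonempty open subsets of `X` one can pick `x n ∈ U n` such that the sequence
`(x n)` has no convergent subsequence. -/
def SHD (X : Type*) [TopologicalSpace X] : Prop :=
  ∀ U : ℕ → Set X, (∀ n, IsOpen (U n)) → (∀ n, (U n).Nonempty) →
    ∃ x : ℕ → X, (∀ n, x n ∈ U n) ∧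
      ∀ (k : ℕ → ℕ) (y : X), StrictMono k →
        ¬ Filter.Tendsto (fun n => x (k n)) Filter.atTop (nhds y)

/-- A space with a point admitting a countable neighborhood basis is not SHD. -/
theorem not_shd_of_countable_nhds_basis {X : Type*} [TopologicalSpace X] (x : X)
    (B : Set (Set X)) (hBc : B.Countable)
    (hBnhds : ∀ b ∈ B, b ∈ nhds x)
    (hBbasis : ∀ N ∈ nhds x, ∃ b ∈ B, b ⊆ N) :
    ¬ SHD X := by
  intro hSHD
  have hB : (nhds x).HasBasis (fun _ : B => True) (fun b => (b : Set X)) := by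
    refine ⟨fun N => ⟨fun hN => ?_, fun ⟨b, _, hsub⟩ => mem_of_superset (hBnhds b b.2) hsub⟩⟩
    obtain ⟨b, hb, hsub⟩ := hBbasis N hN
    exact ⟨⟨b, hb⟩, trivial, hsub⟩
  have : Countable B := hBc.to_subtype
  have : (nhds x).IsCountablyGenerated := hB.isCountablyGenerated
  obtain ⟨s, hs⟩ := (nhds x).exists_antitone_basis
  set U : ℕ → Set X := fun n => interior (s n) with hU
  have hmem : ∀ n, x ∈ U n := fun n =>
    mem_interior_iff_mem_nhds.2 (hs.1.mem_of_mem trivial)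
  obtain ⟨p, hp, hdiv⟩ := hSHD U (fun n => isOpen_interior) (fun n => ⟨x, hmem n⟩)
  refine hdiv id x strictMono_id ?_
  refine hs.1.tendsto_right_iff.2 fun i _ => ?_
  filter_upwards [Filter.eventually_ge_atTop i] with n hn
  exact hs.2 hn (interior_subset (hp n))
end

section
/- Let {X_i : i ∈ I} be a family of topological spaces such that at least one X_j is selectively highly divergent, and suppose the product Π_{i∈I} X_i is nonempty. Then the product space Π_{i∈I} X_i (with the product topology) is selectively highly divergent. -/
open Filter Topology

/-- If one factor of a nonempty product is SHD, then the product is SHD. -/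
theorem shd_pi {I : Type*} (X : I → Type*) [∀ i, TopologicalSpace (X i)]
    (j : I) (hj : SHD (X j)) (hne : Nonempty (∀ i, X i)) :
    SHD (∀ i, X i) := by
  intro U hopen hne'
  set V : ℕ → Set (X j) := fun n => Function.eval j '' U n with hV
  have hVopen : ∀ n, IsOpen (V n) := fun n => isOpenMap_eval j _ (hopen n)
  have hVne : ∀ n, (V n).Nonempty := fun n => (hne' n).image _
  obtain ⟨y, hy, hdiv⟩ := hj V hVopen hVne
  have : ∀ n, ∃ x ∈ U n, Function.eval j x = y n := fun n => hy n
  choose x hxU hxj using this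
  refine ⟨x, hxU, fun k z hk htend => ?_⟩
  have := (continuous_apply j).continuousAt.tendsto.comp htend
  apply hdiv k (z j) hk
  have h2 : ((fun p : ∀ i, X i => p j) ∘ fun n => x (k n)) = fun n => y (k n) := funext fun n => hxj (k n)
  rwa [h2] at this
end

section
/- If {X_i : i ∈ I} is a family of topological spaces each of which is selectively highly divergent, then the topological sum (disjoint union) ⨁_{i∈I} X_i, with the sum topology, is selectively highly divergent. -/
open Filter Topology

/-- A topological sum of SHD spaces is SHD. -/
theorem shd_sigma {I : Type*} (X : I → Type*) [∀ i, TopologicalSpace (X i)]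
    (h : ∀ i, SHD (X i)) :
    SHD (Σ i, X i) := by
  classical
  intro U hUo hUne
  choose p hp using hUne
  set P : I → ℕ → Prop := fun i n => (p n).1 = i with hPdef
  have key : ∀ i, (setOf (P i)).Infinite → ∃ f : ℕ → X i,
      (∀ k, Sigma.mk i (f k) ∈ U (Nat.nth (P i) k)) ∧
      ∀ (k : ℕ → ℕ) (y : X i), StrictMono k →
        ¬ Tendsto (fun n => f (k n)) atTop (𝓝 y) := by
    intro i hi
    have hV : ∀ m, IsOpen ((Sigma.mk i) ⁻¹' U m) :=
      fun m => (hUo m).preimage continuous_sigmaMk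
    have hVne : ∀ k, ((Sigma.mk i) ⁻¹' U (Nat.nth (P i) k)).Nonempty := by
      intro k
      have hk : P i (Nat.nth (P i) k) := Nat.nth_mem_of_infinite hi k
      have h1 := hp (Nat.nth (P i) k)
      rcases heq : p (Nat.nth (P i) k) with ⟨j, z⟩
      rw [heq] at h1
      have h2 : j = i := by
        have := hk
        simp only [hPdef, heq] at this
        have h3 : (p (Nat.nth (P i) k)).1 = i := hk
        rw [heq] at h3
        exact h3
      subst h2
      exact ⟨z, h1⟩
    obtain ⟨f, hf1, hf2⟩ := h i _ (fun k => hV _) hVne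
    exact ⟨f, hf1, hf2⟩
  choose f hf1 hf2 using key
  refine ⟨fun n =>
    if hn : (setOf (P (p n).1)).Infinite
    then ⟨(p n).1, f (p n).1 hn (Nat.count (P (p n).1) n)⟩
    else p n, ?_, ?_⟩
  · intro n
    dsimp only
    by_cases hn : (setOf (P (p n).1)).Infinite
    · rw [dif_pos hn]
      have hPn : P (p n).1 n := rfl
      have := hf1 (p n).1 hn (Nat.count (P (p n).1) n)
      rwa [Nat.nth_count hPn] at this
    · rw [dif_neg hn]
      exact hp n
  · intro k y hk hten
    obtain ⟨j, z⟩ := y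
    -- eventually the first component is j
    have hmemrange : ∀ᶠ n in atTop,
        (if hn : (setOf (P (p (k n)).1)).Infinite
          then (⟨(p (k n)).1, f (p (k n)).1 hn (Nat.count (P (p (k n)).1) (k n))⟩ : Σ i, X i)
          else p (k n)) ∈ Set.range (Sigma.mk j) := by
      refine hten.eventually (eventually_mem_set.mpr ?_)
      exact isOpen_range_sigmaMk.mem_nhds ⟨z, rfl⟩
    have hfst : ∀ᶠ n in atTop, (p (k n)).1 = j := by
      refine hmemrange.mono fun n hn => ?_
      have h1 : (if hn : (setOf (P (p (k n)).1)).Infinite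
          then (⟨(p (k n)).1, f (p (k n)).1 hn (Nat.count (P (p (k n)).1) (k n))⟩ : Σ i, X i)
          else p (k n)).1 = (p (k n)).1 := by
        split_ifs <;> rfl
      obtain ⟨w, hw⟩ := hn
      rw [← hw] at h1
      exact h1.symm
    obtain ⟨N, hN⟩ := eventually_atTop.mp hfst
    -- the set {m | P j m} is infinite
    have hinf : (setOf (P j)).Infinite := by
      have himg : Set.Infinite (k '' Set.Ici N) :=
        (Set.Ici_infinite N).image (hk.injective.injOn)
      refine himg.mono ?_
      rintro m ⟨n, hn, rfl⟩
      exact hN n hn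
    -- description of x at indices with first component j
    have hx : ∀ m, (p m).1 = j →
        (if hn : (setOf (P (p m).1)).Infinite
          then (⟨(p m).1, f (p m).1 hn (Nat.count (P (p m).1) m)⟩ : Σ i, X i)
          else p m) = ⟨j, f j hinf (Nat.count (P j) m)⟩ := by
      intro m hm
      subst hm
      exact dif_pos hinf
    -- build the subsequence in X j
    set k' : ℕ → ℕ := fun n => Nat.count (P j) (k (n + N)) with hk'def
    have hk' : StrictMono k' := by
      intro a b hab
      have ha : P j (k (a + N)) := hN (a + N) (Nat.le_add_left N a)
      exact Nat.count_strict_mono ha (hk (by omega))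
    have hten2 : Tendsto (fun n => (⟨j, f j hinf (k' n)⟩ : Σ i, X i)) atTop
        (𝓝 ⟨j, z⟩) := by
      have hshift : Tendsto (fun n : ℕ => n + N) atTop atTop := tendsto_add_atTop_nat N
      have := hten.comp hshift
      refine this.congr fun n => ?_
      exact hx (k (n + N)) (hN (n + N) (Nat.le_add_left N n))
    have htenj : Tendsto (fun n => f j hinf (k' n)) atTop (𝓝 z) := by
      rw [Topology.IsEmbedding.sigmaMk.tendsto_nhds_iff]
      exact hten2
    exact hf2 j hinf k' z hk' htenj
end

section
/- Let X be a topological space such that every nonempty open subset of X is infinite and every convergent sequence in X is eventually constant (i.e., X admits no non-trivial convergent sequences). Then X is selectively highly divergent. -/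
open Filter Topology

/-- If every nonempty open subset of `X` is infinite and every convergent
sequence in `X` is eventually constant, then `X` is SHD. -/
theorem shd_of_no_nontrivial_convergent_sequences {X : Type*} [TopologicalSpace X]
    (hinf : ∀ U : Set X, IsOpen U → U.Nonempty → U.Infinite)
    (hconv : ∀ (x : ℕ → X) (y : X), Filter.Tendsto x Filter.atTop (nhds y) →
      ∃ (N : ℕ) (z : X), ∀ n ≥ N, x n = z) :
    SHD X := by
  classical
  intro U hopen hne
  have key : ∀ n (s : Finset X), ∃ p, p ∈ U n ∧ p ∉ s := by
    intro n s
    obtain ⟨p, hp, hps⟩ := (hinf (U n) (hopen n) (hne n)).exists_notMem_finset s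
    exact ⟨p, hp, hps⟩
  choose f hf1 hf2 using key
  let L : ℕ → Finset X := fun n => Nat.rec ∅ (fun m s => insert (f m s) s) n
  let x : ℕ → X := fun n => f n (L n)
  have hLsucc : ∀ n, L (n + 1) = insert (x n) (L n) := fun n => rfl
  have hmem : ∀ m n, m < n → x m ∈ L n := by
    intro m n h
    induction n with
    | zero => omega
    | succ n ih =>
      rw [hLsucc]
      rcases Nat.lt_succ_iff_lt_or_eq.mp h with h | h
      · exact Finset.mem_insert_of_mem (ih h)
      · subst h; exact Finset.mem_insert_self _ _
  have hinj : Function.Injective x := by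
    intro a b hab
    by_contra hne'
    rcases Nat.lt_or_ge a b with h | h
    · have : x b ∈ L b := hab ▸ hmem a b h
      exact hf2 b (L b) this
    · have h' : b < a := lt_of_le_of_ne h (Ne.symm hne')
      have : x a ∈ L a := hab ▸ hmem b a h'
      exact hf2 a (L a) this
  refine ⟨x, fun n => hf1 n (L n), ?_⟩
  intro k y hk ht
  obtain ⟨N, z, hz⟩ := hconv (fun n => x (k n)) y ht
  have h1 : x (k N) = z := hz N le_rfl
  have h2 : x (k (N + 1)) = z := hz (N + 1) (by omega)
  have := hinj (h1.trans h2.symm)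
  exact absurd this (Nat.ne_of_lt (hk (Nat.lt_succ_self N)))
end

section
/- If X is an extremally disconnected Tychonoff (completely regular Hausdorff) topological space with no isolated points, then X is selectively highly divergent. -/
open Filter Topology

section AuxSHD
open Set
open scoped Classical

section Pick

variable {X : Type*}

/-- Recursively pick a point of `U n` avoiding all previously chosen points,
carrying the finite set of already-chosen points. -/
noncomputable def pickAux (U : ℕ → Set X) (h : ∀ n (F : Finset X), ∃ x ∈ U n, x ∉ F) :
    ℕ → X × Finset X
  | 0 => ((h 0 ∅).choose, {(h 0 ∅).choose})
  | n + 1 =>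
      let p := pickAux U h n
      ((h (n+1) p.2).choose, insert (h (n+1) p.2).choose p.2)

variable (U : ℕ → Set X) (h : ∀ n (F : Finset X), ∃ x ∈ U n, x ∉ F)

lemma pickAux_mem (n : ℕ) : (pickAux U h n).1 ∈ U n := by
  cases n with
  | zero => exact (h 0 ∅).choose_spec.1
  | succ n => exact (h (n+1) (pickAux U h n).2).choose_spec.1

lemma pickAux_fst_mem_snd (n : ℕ) : (pickAux U h n).1 ∈ (pickAux U h n).2 := by
  cases n with
  | zero => simp [pickAux]
  | succ n => simp [pickAux]

lemma pickAux_snd_mono {m n : ℕ} (hmn : m ≤ n) : (pickAux U h m).2 ⊆ (pickAux U h n).2 := by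
  induction n with
  | zero => simpa [Nat.le_zero.mp hmn] using Finset.Subset.refl _
  | succ n ih =>
      rcases Nat.le_succ_iff.mp hmn with h' | h'
      · exact (ih h').trans (by simp [pickAux])
      · subst h'; exact Finset.Subset.refl _

lemma pickAux_notMem (n : ℕ) : (pickAux U h (n+1)).1 ∉ (pickAux U h n).2 :=
  (h (n+1) (pickAux U h n).2).choose_spec.2

lemma pickAux_injective : Function.Injective (fun n => (pickAux U h n).1) := by
  have key : ∀ m n, m < n → (pickAux U h n).1 ≠ (pickAux U h m).1 := by
    intro m n hmn heq
    obtain ⟨n, rfl⟩ := Nat.exists_eq_add_of_lt hmn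
    -- n is such that original n = m + n + 1
    have h1 : (pickAux U h m).1 ∈ (pickAux U h (m + n)).2 :=
      pickAux_snd_mono U h (Nat.le_add_right m n) (pickAux_fst_mem_snd U h m)
    exact pickAux_notMem U h (m + n) (heq ▸ h1)
  intro a b hab
  rcases lt_trichotomy a b with h' | h' | h'
  · exact absurd hab.symm (key a b h')
  · exact h'
  · exact absurd hab (key b a h')

end Pick

section Fam

variable {X : Type*} [TopologicalSpace X] [T2Space X] [RegularSpace X]
  (w : ℕ → X) (y : X)

lemma stepEx (hw : Tendsto w atTop (𝓝 y)) (C : Set X) (hC : IsClosed C) (hy : y ∉ C) (N : ℕ)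
    (hne : ∀ n, w n ≠ y) :
    ∃ p : ℕ × Set X, N < p.1 ∧ IsOpen p.2 ∧ w p.1 ∈ p.2 ∧ closure p.2 ⊆ Cᶜ ∧ y ∉ closure p.2 := by
  have hCc : Cᶜ ∈ 𝓝 y := hC.isOpen_compl.mem_nhds hy
  have h1 : ∀ᶠ k in atTop, w k ∈ Cᶜ := hw.eventually (hC.isOpen_compl.eventually_mem hy)
  have h2 : ∀ᶠ k in atTop, N < k := eventually_gt_atTop N
  obtain ⟨k, hk1, hk2⟩ := (h1.and h2).exists
  have hky : w k ≠ y := hne k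
  have hV : IsOpen (Cᶜ ∩ {y}ᶜ) := hC.isOpen_compl.inter isClosed_singleton.isOpen_compl
  have hmem : w k ∈ Cᶜ ∩ {y}ᶜ := ⟨hk1, by simpa using hky⟩
  obtain ⟨t, ht, htc, hts⟩ := exists_mem_nhds_isClosed_subset (hV.mem_nhds hmem)
  refine ⟨(k, interior t), hk2, isOpen_interior, mem_interior_iff_mem_nhds.mpr ht, ?_, ?_⟩
  · exact (closure_minimal interior_subset htc).trans (hts.trans (Set.inter_subset_left))
  · intro hyc
    exact ((closure_minimal interior_subset htc).trans hts hyc).2 rfl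

variable (hw : Tendsto w atTop (𝓝 y)) (hne : ∀ n, w n ≠ y)

/-- The recursively chosen family: `(index, open set, union of closures so far)`. -/
noncomputable def fam : ℕ → {p : ℕ × Set X × Set X // IsClosed p.2.2 ∧ y ∉ p.2.2}
  | 0 =>
    let s := (stepEx w y hw ∅ isClosed_empty (Set.notMem_empty y) 0 hne).choose
    have hs := (stepEx w y hw ∅ isClosed_empty (Set.notMem_empty y) 0 hne).choose_spec
    ⟨(s.1, s.2, closure s.2), isClosed_closure, hs.2.2.2.2⟩
  | n + 1 =>
    let q := fam n
    let s := (stepEx w y hw q.1.2.2 q.2.1 q.2.2 q.1.1 hne).choose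
    have hs := (stepEx w y hw q.1.2.2 q.2.1 q.2.2 q.1.1 hne).choose_spec
    ⟨(s.1, s.2, q.1.2.2 ∪ closure s.2), q.2.1.union isClosed_closure,
      fun hy => hy.elim q.2.2 hs.2.2.2.2⟩

/-- index -/
noncomputable def famM (n : ℕ) : ℕ := (fam w y hw hne n).1.1
/-- open set -/
noncomputable def famO (n : ℕ) : Set X := (fam w y hw hne n).1.2.1
/-- accumulated closed set -/
noncomputable def famC (n : ℕ) : Set X := (fam w y hw hne n).1.2.2

lemma fam_isOpen (n : ℕ) : IsOpen (famO w y hw hne n) := by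
  cases n with
  | zero => exact (stepEx w y hw ∅ isClosed_empty (Set.notMem_empty y) 0 hne).choose_spec.2.1
  | succ n =>
      exact (stepEx w y hw _ (fam w y hw hne n).2.1 (fam w y hw hne n).2.2
        (fam w y hw hne n).1.1 hne).choose_spec.2.1

lemma fam_mem (n : ℕ) : w (famM w y hw hne n) ∈ famO w y hw hne n := by
  cases n with
  | zero => exact (stepEx w y hw ∅ isClosed_empty (Set.notMem_empty y) 0 hne).choose_spec.2.2.1
  | succ n =>
      exact (stepEx w y hw _ (fam w y hw hne n).2.1 (fam w y hw hne n).2.2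
        (fam w y hw hne n).1.1 hne).choose_spec.2.2.1

lemma fam_closure_subset (n : ℕ) : closure (famO w y hw hne n) ⊆ famC w y hw hne n := by
  cases n with
  | zero => exact subset_rfl
  | succ n => exact Set.subset_union_right

lemma fam_mono (n : ℕ) : famC w y hw hne n ⊆ famC w y hw hne (n + 1) :=
  Set.subset_union_left

lemma fam_disjoint_succ (n : ℕ) :
    Disjoint (closure (famO w y hw hne (n + 1))) (famC w y hw hne n) := by
  have := (stepEx w y hw _ (fam w y hw hne n).2.1 (fam w y hw hne n).2.2
    (fam w y hw hne n).1.1 hne).choose_spec.2.2.2.1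
  exact Set.disjoint_left.mpr fun a ha hb => (this ha) hb

lemma famM_lt_succ (n : ℕ) : famM w y hw hne n < famM w y hw hne (n + 1) :=
  (stepEx w y hw _ (fam w y hw hne n).2.1 (fam w y hw hne n).2.2
    (fam w y hw hne n).1.1 hne).choose_spec.1

lemma famM_strictMono : StrictMono (famM w y hw hne) :=
  strictMono_nat_of_lt_succ (famM_lt_succ w y hw hne)

lemma famC_mono : Monotone (famC w y hw hne) :=
  monotone_nat_of_le_succ (fam_mono w y hw hne)

lemma fam_disjoint {i j : ℕ} (hij : i < j) :
    Disjoint (closure (famO w y hw hne i)) (closure (famO w y hw hne j)) := by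
  obtain ⟨k, rfl⟩ := Nat.exists_eq_add_of_lt hij
  refine ((fam_disjoint_succ w y hw hne (i + k)).mono_right ?_).symm
  exact (fam_closure_subset w y hw hne i).trans (famC_mono w y hw hne (Nat.le_add_right i k))

end Fam

lemma no_nontrivial_convergent {X : Type*} [TopologicalSpace X] [T2Space X] [RegularSpace X]
    [ExtremallyDisconnected X] {w : ℕ → X} {y : X}
    (hw : Tendsto w atTop (𝓝 y)) (hne : ∀ n, w n ≠ y) : False := by
  set O := famO w y hw hne with hO
  set m := famM w y hw hne with hm
  set V := ⋃ n, O (2 * n) with hV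
  set W := ⋃ n, O (2 * n + 1) with hW
  have hdisjO : ∀ i j : ℕ, i ≠ j → Disjoint (closure (O i)) (closure (O j)) := by
    intro i j hij
    rcases lt_or_gt_of_ne hij with h' | h'
    · exact fam_disjoint w y hw hne h'
    · exact (fam_disjoint w y hw hne h').symm
  have hVo : IsOpen V := isOpen_iUnion fun n => fam_isOpen w y hw hne _
  have hWo : IsOpen W := isOpen_iUnion fun n => fam_isOpen w y hw hne _
  have hVW : Disjoint V W := by
    refine Set.disjoint_iUnion_left.mpr fun i => Set.disjoint_iUnion_right.mpr fun j => ?_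
    exact (hdisjO (2 * i) (2 * j + 1) (by omega)).mono subset_closure subset_closure
  have hclo := ExtremallyDisconnected.disjoint_closure_of_disjoint_isOpen hVW hVo hWo
  have hsm : StrictMono m := famM_strictMono w y hw hne
  have hyV : y ∈ closure V := by
    have ht : Tendsto (fun n => w (m (2 * n))) atTop (𝓝 y) :=
      hw.comp ((hsm.comp (strictMono_mul_left_of_pos (by norm_num : (0:ℕ) < 2))).tendsto_atTop)
    exact mem_closure_of_tendsto ht (Eventually.of_forall fun n =>
      Set.mem_iUnion.mpr ⟨n, fam_mem w y hw hne (2 * n)⟩)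
  have hyW : y ∈ closure W := by
    have hsm2 : StrictMono (fun n : ℕ => 2 * n + 1) :=
      fun a b hab => by simp only []; omega
    have ht : Tendsto (fun n => w (m (2 * n + 1))) atTop (𝓝 y) :=
      hw.comp ((hsm.comp hsm2).tendsto_atTop)
    exact mem_closure_of_tendsto ht (Eventually.of_forall fun n =>
      Set.mem_iUnion.mpr ⟨n, fam_mem w y hw hne (2 * n + 1)⟩)
  exact Set.disjoint_left.mp hclo hyV hyW

end AuxSHD

/-- An extremally disconnected Tychonoff space with no isolated points is SHD. -/
theorem shd_of_extremallyDisconnected {X : Type*} [TopologicalSpace X]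
    [T2Space X] [CompletelyRegularSpace X] [ExtremallyDisconnected X]
    (hiso : ∀ x : X, ¬ IsOpen ({x} : Set X)) :
    SHD X := by
  intro U hUo hUne
  -- every nonempty open set is infinite
  have hInf : ∀ n, (U n).Infinite := by
    intro n
    obtain ⟨p, hp⟩ := hUne n
    haveI : NeBot (𝓝[≠] p) := by
      rw [neBot_iff]
      intro hbot
      exact hiso p ((isOpen_singleton_iff_punctured_nhds p).mpr hbot)
    exact infinite_of_mem_nhds p ((hUo n).mem_nhds hp)
  have hpick : ∀ n (F : Finset X), ∃ x ∈ U n, x ∉ F := by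
    intro n F
    obtain ⟨x, hx⟩ := ((hInf n).diff F.finite_toSet).nonempty
    exact ⟨x, hx.1, by simpa using hx.2⟩
  refine ⟨fun n => (pickAux U hpick n).1, fun n => pickAux_mem U hpick n, ?_⟩
  intro k y hk hten
  have hxinj : Function.Injective (fun n => (pickAux U hpick n).1) := pickAux_injective U hpick
  -- the subsequence hits `y` at most once
  have hN : ∃ N, ∀ n, N ≤ n → (pickAux U hpick (k n)).1 ≠ y := by
    by_contra hcon
    push_neg at hcon
    obtain ⟨n₁, hn₁, he₁⟩ := hcon 0
    obtain ⟨n₂, hn₂, he₂⟩ := hcon (n₁ + 1)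
    have : k n₁ = k n₂ := hxinj (he₁.trans he₂.symm)
    have : n₁ = n₂ := hk.injective this
    omega
  obtain ⟨N, hNne⟩ := hN
  have hw : Tendsto (fun n => (pickAux U hpick (k (n + N))).1) atTop (𝓝 y) :=
    hten.comp (tendsto_add_atTop_nat N)
  exact no_nontrivial_convergent hw (fun n => hNne (n + N) (Nat.le_add_left N n))
end

section
/- Let X be a Tychonoff (completely regular Hausdorff) topological space that is locally compact, σ-compact, and not compact. Then the remainder X* = βX \ e[X] of the Stone–Čech compactification βX of X (where e : X → βX is the canonical dense embedding) is a nonempty compact space which is selectively highly divergent. -/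
open Filter Topology

section Aux

open Set

variable {X : Type*} [TopologicalSpace X]

/-- For a completely regular space, the canonical map to the Stone–Čech compactification
is inducing. -/
lemma isInducing_stoneCechUnit_aux [CompletelyRegularSpace X] :
    Topology.IsInducing (stoneCechUnit : X → StoneCech X) := by
  rw [isInducing_iff_nhds]
  intro x
  refine le_antisymm (continuous_stoneCechUnit.tendsto x).le_comap ?_
  intro U hU
  rcases mem_nhds_iff.1 hU with ⟨V, hVU, hVopen, hxV⟩
  obtain ⟨f, hf, hfx, hfK⟩ :=
    CompletelyRegularSpace.completely_regular x Vᶜ hVopen.isClosed_compl (by simp [hxV])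
  refine Filter.mem_comap.2 ⟨(stoneCechExtend hf) ⁻¹' {1}ᶜ, ?_, ?_⟩
  · refine IsOpen.mem_nhds
      ((isClosed_singleton.preimage (continuous_stoneCechExtend hf)).isOpen_compl) ?_
    have hx0 : stoneCechExtend hf (stoneCechUnit x) = f x :=
      congrFun (stoneCechExtend_extends hf) x
    simp only [Set.mem_preimage, Set.mem_compl_iff, Set.mem_singleton_iff, hx0, hfx]
    exact fun h => zero_ne_one (congrArg Subtype.val h)
  · intro y hy
    have hy' : stoneCechExtend hf (stoneCechUnit y) = f y :=
      congrFun (stoneCechExtend_extends hf) y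
    simp only [Set.mem_preimage, Set.mem_compl_iff, Set.mem_singleton_iff, hy'] at hy
    by_contra hyU
    have hyV : y ∉ V := fun h => hyU (hVU h)
    exact hy (hfK hyV)

lemma isEmbedding_stoneCechUnit_aux [T2Space X] [CompletelyRegularSpace X] :
    Topology.IsEmbedding (stoneCechUnit : X → StoneCech X) := by
  have : T35Space X := ⟨⟩
  exact ⟨isInducing_stoneCechUnit_aux, injective_stoneCechUnit_of_t35Space⟩

/-- For a locally compact completely regular Hausdorff space, the image of the canonical map
into the Stone–Čech compactification is open. -/
lemma isOpen_range_stoneCechUnit_aux [T2Space X] [CompletelyRegularSpace X]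
    [LocallyCompactSpace X] :
    IsOpen (Set.range (stoneCechUnit : X → StoneCech X)) := by
  have hInd : Topology.IsInducing (stoneCechUnit : X → StoneCech X) :=
    isInducing_stoneCechUnit_aux
  rw [isOpen_iff_mem_nhds]
  rintro _ ⟨x, rfl⟩
  obtain ⟨C, hC, hCx⟩ := exists_compact_mem_nhds x
  obtain ⟨O, hO, hOeq⟩ := (hInd.isOpen_iff).1 (isOpen_interior (s := C))
  have hxO : stoneCechUnit x ∈ O := by
    have : x ∈ interior C := mem_interior_iff_mem_nhds.2 hCx
    rw [← hOeq] at this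
    exact this
  have himg : IsClosed (stoneCechUnit '' C) :=
    (hC.image continuous_stoneCechUnit).isClosed
  have hOsub : O ⊆ stoneCechUnit '' C := by
    intro z hz
    have hzcl : z ∈ closure (O ∩ Set.range (stoneCechUnit : X → StoneCech X)) := by
      rw [mem_closure_iff]
      intro N hN hzN
      obtain ⟨a, ha⟩ := denseRange_stoneCechUnit.exists_mem_open (hN.inter hO) ⟨z, hzN, hz⟩
      exact ⟨stoneCechUnit a, ha.1, ha.2, Set.mem_range_self a⟩
    have : O ∩ Set.range (stoneCechUnit : X → StoneCech X) ⊆ stoneCechUnit '' C := by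
      rintro _ ⟨hw, a, rfl⟩
      have : a ∈ interior C := by rw [← hOeq]; exact hw
      exact ⟨a, interior_subset this, rfl⟩
    have := closure_mono this hzcl
    rwa [himg.closure_eq] at this
  exact mem_nhds_iff.2 ⟨O, hOsub.trans (Set.image_subset_range _ _), hO, hxO⟩

/-- A set meeting each compact set in a finite set is closed (in a locally compact T₁ space). -/
lemma isClosed_of_finite_inter_compact [T1Space X] [WeaklyLocallyCompactSpace X]
    {S : Set X} (h : ∀ C : Set X, IsCompact C → (S ∩ C).Finite) : IsClosed S := by
  rw [← isOpen_compl_iff, isOpen_iff_mem_nhds]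
  intro x hx
  obtain ⟨C, hC, hCx⟩ := exists_compact_mem_nhds x
  have hfin : IsClosed (S ∩ C) := (h C hC).isClosed
  have hmem : interior C ∩ (S ∩ C)ᶜ ∈ nhds x := by
    refine Filter.inter_mem (isOpen_interior.mem_nhds (mem_interior_iff_mem_nhds.2 hCx)) ?_
    exact hfin.isOpen_compl.mem_nhds (fun hxs => hx hxs.1)
  exact Filter.mem_of_superset hmem
    (fun y hy hyS => hy.2 ⟨hyS, interior_subset hy.1⟩)

end Aux

/-- For a locally compact, σ-compact, non-compact Tychonoff space `X`, the
remainder `βX \ e[X]` of its Stone–Čech compactification is a nonempty compact SHD space. -/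
theorem remainder_nonempty_compact_shd {X : Type*} [TopologicalSpace X]
    [T2Space X] [CompletelyRegularSpace X] [LocallyCompactSpace X] [SigmaCompactSpace X]
    (hnc : ¬ CompactSpace X) :
    ((Set.range (stoneCechUnit : X → StoneCech X))ᶜ).Nonempty ∧
    IsCompact ((Set.range (stoneCechUnit : X → StoneCech X))ᶜ) ∧
    SHD ((Set.range (stoneCechUnit : X → StoneCech X))ᶜ : Set (StoneCech X)) := by
  have hemb : Topology.IsEmbedding (stoneCechUnit : X → StoneCech X) :=
    isEmbedding_stoneCechUnit_aux
  have hdense : DenseRange (stoneCechUnit : X → StoneCech X) := denseRange_stoneCechUnit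
  have hopen : IsOpen (Set.range (stoneCechUnit : X → StoneCech X)) :=
    isOpen_range_stoneCechUnit_aux
  -- Nonemptiness of the remainder
  have hne : ((Set.range (stoneCechUnit : X → StoneCech X))ᶜ).Nonempty := by
    rw [Set.nonempty_compl]
    intro h
    refine hnc ⟨?_⟩
    have : IsCompact (stoneCechUnit '' (Set.univ : Set X)) := by
      rw [Set.image_univ, h]; exact isCompact_univ
    exact hemb.isCompact_iff.2 this
  -- Compactness of the remainder
  have hcpt : IsCompact ((Set.range (stoneCechUnit : X → StoneCech X))ᶜ) :=
    hopen.isClosed_compl.isCompact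
  refine ⟨hne, hcpt, ?_⟩
  -- SHD
  intro U hUopen hUne
  set e : X → StoneCech X := stoneCechUnit with he
  set R : Set (StoneCech X) := (Set.range e)ᶜ with hR
  let K : CompactExhaustion X := CompactExhaustion.choice X
  -- choose points in U n and open sets V n of βX representing U n
  choose p hp using hUne
  choose V hVopen hVeq using fun n => isOpen_induced_iff.1 (hUopen n)
  -- shrink V n with closure inside it
  have hW : ∀ n, ∃ Wn : Set (StoneCech X), IsOpen Wn ∧ (p n : StoneCech X) ∈ Wn ∧
      closure Wn ⊆ V n := by
    intro n
    have hpV : (p n : StoneCech X) ∈ V n := by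
      have := hp n; rw [← hVeq n] at this; exact this
    obtain ⟨t, ht, htc, hts⟩ := exists_mem_nhds_isClosed_subset ((hVopen n).mem_nhds hpV)
    refine ⟨interior t, isOpen_interior, mem_interior_iff_mem_nhds.2 ht, ?_⟩
    exact (closure_minimal interior_subset htc).trans hts
  choose W hWopen hWmem hWcl using hW
  -- recursive choice of escaping points
  have hsel : ∀ (j : ℕ) (l : List X), ∃ a : X,
      e a ∈ W (Nat.unpair j).1 ∧ a ∉ K j ∧ a ∉ l := by
    intro j l
    set n := (Nat.unpair j).1
    have hpn : (p n : StoneCech X) ∉ Set.range e := (p n).2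
    have hclosed : IsClosed (e '' (K j) ∪ e '' {a | a ∈ l}) := by
      refine IsClosed.union ?_ ?_
      · exact ((K.isCompact j).image continuous_stoneCechUnit).isClosed
      · exact (Set.Finite.image e (List.finite_toSet l)).isClosed
    have hOopen : IsOpen (W n ∩ (e '' (K j) ∪ e '' {a | a ∈ l})ᶜ) :=
      (hWopen n).inter hclosed.isOpen_compl
    have hOne : (W n ∩ (e '' (K j) ∪ e '' {a | a ∈ l})ᶜ).Nonempty := by
      refine ⟨p n, hWmem n, ?_⟩
      rintro (⟨a, _, hae⟩ | ⟨a, _, hae⟩) <;> exact hpn ⟨a, hae⟩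
    obtain ⟨a, haW, haO⟩ := hdense.exists_mem_open hOopen hOne
    refine ⟨a, haW, ?_, ?_⟩
    · exact fun haK => haO (Or.inl ⟨a, haK, rfl⟩)
    · exact fun hal => haO (Or.inr ⟨a, hal, rfl⟩)
  let step : ℕ → List X → X := fun j l => (hsel j l).choose
  let dl : ℕ → List X := fun j => Nat.rec [] (fun i acc => step i acc :: acc) j
  let d : ℕ → X := fun j => step j (dl j)
  have hdl_succ : ∀ j, dl (j + 1) = d j :: dl j := fun j => rfl
  have hd1 : ∀ j, e (d j) ∈ W (Nat.unpair j).1 := fun j => (hsel j (dl j)).choose_spec.1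
  have hd2 : ∀ j, d j ∉ K j := fun j => (hsel j (dl j)).choose_spec.2.1
  have hd3 : ∀ j, d j ∉ dl j := fun j => (hsel j (dl j)).choose_spec.2.2
  have hmem : ∀ i j, i < j → d i ∈ dl j := by
    intro i j
    induction j with
    | zero => omega
    | succ j ih =>
      intro hij
      rw [hdl_succ j]
      rcases Nat.lt_succ_iff_lt_or_eq.1 hij with h | h
      · exact List.mem_cons_of_mem _ (ih h)
      · subst h; exact List.mem_cons_self
  have hinj : Function.Injective d := by
    intro i j hij
    by_contra hne'
    rcases Nat.lt_or_ge i j with h | h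
    · exact hd3 j (hij ▸ hmem i j h)
    · have : j < i := lt_of_le_of_ne h (Ne.symm hne')
      exact hd3 i (hij ▸ hmem j i this)
  -- the escaping sets D n
  set D : ℕ → Set X := fun n => d '' {j | (Nat.unpair j).1 = n} with hD
  -- each K m contains only finitely many points of range d
  have hfinK : ∀ (S : Set X), S ⊆ Set.range d → ∀ C : Set X, IsCompact C →
      (S ∩ C).Finite := by
    intro S hSsub C hCcompact
    obtain ⟨m, hm⟩ := K.exists_superset_of_isCompact hCcompact
    refine Set.Finite.subset ((Set.finite_Iio m).image d) ?_
    rintro a ⟨haS, haC⟩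
    obtain ⟨j, rfl⟩ := hSsub haS
    refine ⟨j, ?_, rfl⟩
    by_contra hj
    have : m ≤ j := by simpa using hj
    exact hd2 j (K.subset this (hm haC))
  -- choice of the points x n in the remainder
  have hx : ∀ n, ∃ z : StoneCech X, z ∈ closure (e '' D n) ∧ z ∉ Set.range e := by
    intro n
    by_contra hcon
    push_neg at hcon
    have hsub : closure (e '' D n) ⊆ Set.range e := fun z hz => by
      by_contra hznr; exact hznr (hcon z hz)
    have hScompact : IsCompact (closure (e '' D n)) := isClosed_closure.isCompact
    have hCcompact : IsCompact (e ⁻¹' closure (e '' D n)) := by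
      refine hemb.isCompact_iff.2 ?_
      rwa [Set.image_preimage_eq_inter_range, Set.inter_eq_left.2 hsub]
    obtain ⟨m, hm⟩ := K.exists_superset_of_isCompact hCcompact
    set j := Nat.pair n m with hj
    have hjD : d j ∈ D n := ⟨j, by simp [hj, Nat.unpair_pair], rfl⟩
    have hdj : d j ∈ e ⁻¹' closure (e '' D n) :=
      subset_closure (Set.mem_image_of_mem e hjD)
    have : d j ∈ K j := K.subset (Nat.right_le_pair n m) (hm hdj)
    exact hd2 j this
  choose x' hx'cl hx'nr using hx
  refine ⟨fun n => ⟨x' n, hx'nr n⟩, ?_, ?_⟩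
  · -- membership in U n
    intro n
    have hDW : e '' D n ⊆ W n := by
      rintro _ ⟨a, ⟨j, hj, rfl⟩, rfl⟩
      have := hd1 j
      rwa [hj] at this
    have : x' n ∈ V n := hWcl n (closure_mono hDW (hx'cl n))
    rw [← hVeq n]
    exact this
  · -- no convergent subsequence
    intro k y hk hconv
    have hconv' : Filter.Tendsto (fun i => x' (k i)) Filter.atTop (nhds (y : StoneCech X)) :=
      (continuous_subtype_val.tendsto y).comp hconv
    -- the two disjoint closed sets
    set A : Set X := d '' {j | ∃ i, (Nat.unpair j).1 = k (2 * i)} with hA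
    set B : Set X := d '' {j | ∃ i, (Nat.unpair j).1 = k (2 * i + 1)} with hB
    have hdisj : Disjoint A B := by
      rw [Set.disjoint_left]
      rintro _ ⟨j, ⟨i, hi⟩, rfl⟩ ⟨j', ⟨i', hi'⟩, hj'⟩
      have : j' = j := hinj hj'
      subst this
      rw [hi] at hi'
      have := hk.injective hi'
      omega
    have hAclosed : IsClosed A :=
      isClosed_of_finite_inter_compact
        (hfinK A (by rintro _ ⟨j, _, rfl⟩; exact ⟨j, rfl⟩))
    have hBclosed : IsClosed B :=
      isClosed_of_finite_inter_compact
        (hfinK B (by rintro _ ⟨j, _, rfl⟩; exact ⟨j, rfl⟩))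
    obtain ⟨f, hf0, hf1, hficc⟩ := exists_continuous_zero_one_of_isClosed hAclosed hBclosed hdisj
    set g : X → unitInterval := fun a => ⟨f a, hficc a⟩ with hg
    have hgc : Continuous g := f.continuous.subtype_mk hficc
    set F : StoneCech X → unitInterval := stoneCechExtend hgc with hF
    have hFc : Continuous F := continuous_stoneCechExtend hgc
    have hFe : ∀ a : X, F (e a) = g a := fun a => congrFun (stoneCechExtend_extends hgc) a
    -- F is constant on closures of the relevant D n
    have hconst : ∀ (c : unitInterval) (n : ℕ), (∀ a ∈ D n, g a = c) →
        F (x' n) = c := by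
      intro c n hgc'
      have hsub : e '' D n ⊆ F ⁻¹' {c} := by
        rintro _ ⟨a, ha, rfl⟩
        simp only [Set.mem_preimage, Set.mem_singleton_iff, hFe a, hgc' a ha]
      have := closure_minimal hsub ((isClosed_singleton).preimage hFc) (hx'cl n)
      simpa using this
    have heven : ∀ i, F (x' (k (2 * i))) = 0 := by
      intro i
      refine hconst 0 (k (2 * i)) ?_
      rintro _ ⟨j, hj, rfl⟩
      have hjA : d j ∈ A := ⟨j, ⟨i, hj⟩, rfl⟩
      exact Subtype.ext (hf0 hjA)
    have hodd : ∀ i, F (x' (k (2 * i + 1))) = 1 := by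
      intro i
      refine hconst 1 (k (2 * i + 1)) ?_
      rintro _ ⟨j, hj, rfl⟩
      have hjB : d j ∈ B := ⟨j, ⟨i, hj⟩, rfl⟩
      exact Subtype.ext (hf1 hjB)
    -- derive the contradiction
    have htend : Filter.Tendsto (fun i => ((F (x' (k i)) : unitInterval) : ℝ))
        Filter.atTop (nhds ((F (y : StoneCech X) : unitInterval) : ℝ)) :=
      ((continuous_subtype_val.comp hFc).tendsto _).comp hconv'
    have h2 : Filter.Tendsto (fun i : ℕ => 2 * i) Filter.atTop Filter.atTop :=
      Filter.tendsto_atTop_mono (fun i => by simp only [id_eq]; omega) Filter.tendsto_id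
    have h2' : Filter.Tendsto (fun i : ℕ => 2 * i + 1) Filter.atTop Filter.atTop :=
      Filter.tendsto_atTop_mono (fun i => by simp only [id_eq]; omega) Filter.tendsto_id
    have hlim0 : ((F (y : StoneCech X) : unitInterval) : ℝ) = 0 := by
      have := htend.comp h2
      have h0 : (fun i : ℕ => ((F (x' (k (2 * i))) : unitInterval) : ℝ)) = fun _ => (0 : ℝ) := by
        funext i; rw [heven i]; simp
      rw [show ((fun i => ((F (x' (k i)) : unitInterval) : ℝ)) ∘ fun i : ℕ => 2 * i)
          = fun i : ℕ => ((F (x' (k (2 * i))) : unitInterval) : ℝ) from rfl, h0] at this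
      exact tendsto_nhds_unique this tendsto_const_nhds
    have hlim1 : ((F (y : StoneCech X) : unitInterval) : ℝ) = 1 := by
      have := htend.comp h2'
      have h1 : (fun i : ℕ => ((F (x' (k (2 * i + 1))) : unitInterval) : ℝ))
          = fun _ => (1 : ℝ) := by
        funext i; rw [hodd i]; simp
      rw [show ((fun i => ((F (x' (k i)) : unitInterval) : ℝ)) ∘ fun i : ℕ => 2 * i + 1)
          = fun i : ℕ => ((F (x' (k (2 * i + 1))) : unitInterval) : ℝ) from rfl, h1] at this
      exact tendsto_nhds_unique this tendsto_const_nhds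
    rw [hlim0] at hlim1
    exact zero_ne_one hlim1
end

section
/- Let X be a T1 topological space in which every countable subset is closed. If X is selectively highly divergent, then the Pixley–Roy hyperspace F[X] is selectively highly divergent. -/
open Filter Topology

/-- The Pixley–Roy hyperspace of `X`: the set of nonempty finite subsets of `X`. -/
def PixleyRoy (X : Type*) : Type _ := {F : Set X // F.Finite ∧ F.Nonempty}

/-- The Pixley–Roy topology, generated by the basic sets
`[F, V] = {H : F ⊆ H ⊆ V}` for `F` nonempty finite, `V` open, `F ⊆ V`. -/
instance PixleyRoy.topologicalSpace (X : Type*) [TopologicalSpace X] :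
    TopologicalSpace (PixleyRoy X) :=
  TopologicalSpace.generateFrom
    {B : Set (PixleyRoy X) | ∃ F V : Set X, F.Finite ∧ F.Nonempty ∧ IsOpen V ∧ F ⊆ V ∧
      B = {H : PixleyRoy X | F ⊆ H.1 ∧ H.1 ⊆ V}}

lemma PixleyRoy.isBasis (X : Type*) [TopologicalSpace X] :
    TopologicalSpace.IsTopologicalBasis
      {B : Set (PixleyRoy X) | ∃ F V : Set X, F.Finite ∧ F.Nonempty ∧ IsOpen V ∧ F ⊆ V ∧
        B = {H : PixleyRoy X | F ⊆ H.1 ∧ H.1 ⊆ V}} := by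
  refine ⟨?_, ?_, rfl⟩
  · rintro t₁ ⟨F₁, V₁, hF₁, hFne₁, hV₁, hFV₁, rfl⟩ t₂ ⟨F₂, V₂, hF₂, hFne₂, hV₂, hFV₂, rfl⟩
      H ⟨⟨h1, h2⟩, h3, h4⟩
    refine ⟨{K : PixleyRoy X | H.1 ⊆ K.1 ∧ K.1 ⊆ V₁ ∩ V₂},
      ⟨H.1, V₁ ∩ V₂, H.2.1, H.2.2, hV₁.inter hV₂, Set.subset_inter h2 h4, rfl⟩,
      ⟨subset_rfl, Set.subset_inter h2 h4⟩, ?_⟩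
    rintro K ⟨hK1, hK2⟩
    exact ⟨⟨h1.trans hK1, hK2.trans Set.inter_subset_left⟩,
           ⟨h3.trans hK1, hK2.trans Set.inter_subset_right⟩⟩
  · apply Set.eq_univ_of_forall
    intro H
    exact Set.mem_sUnion.2 ⟨{K : PixleyRoy X | H.1 ⊆ K.1 ∧ K.1 ⊆ Set.univ},
      ⟨H.1, Set.univ, H.2.1, H.2.2, isOpen_univ, Set.subset_univ _, rfl⟩,
      subset_rfl, Set.subset_univ _⟩

/-- If `X` is `T1`, countable sets are closed in `X`, and `X` is SHD, then the
Pixley–Roy hyperspace of `X` is SHD. -/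
theorem pixleyRoy_shd {X : Type*} [TopologicalSpace X] [T1Space X]
    (hc : ∀ A : Set X, A.Countable → IsClosed A)
    (hX : SHD X) :
    SHD (PixleyRoy X) := by
  intro U hUopen hUne
  have hsel : ∀ n, ∃ F V : Set X, F.Finite ∧ F.Nonempty ∧ IsOpen V ∧ F ⊆ V ∧
      {H : PixleyRoy X | F ⊆ H.1 ∧ H.1 ⊆ V} ⊆ U n := by
    intro n
    obtain ⟨H₀, hH₀⟩ := hUne n
    obtain ⟨t, ht, hH₀t, htU⟩ :=
      (PixleyRoy.isBasis X).exists_subset_of_mem_open hH₀ (hUopen n)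
    obtain ⟨F, V, h1, h2, h3, h4, rfl⟩ := ht
    exact ⟨F, V, h1, h2, h3, h4, htU⟩
  choose F V hFfin hFne hVopen hFV hsub using hsel
  have hVne : ∀ n, (V n).Nonempty := fun n => (hFne n).mono (hFV n)
  obtain ⟨x, hx, hdiv⟩ := hX V hVopen hVne
  refine ⟨fun n => ⟨F n ∪ {x n}, (hFfin n).union (Set.finite_singleton _), (hFne n).inl⟩,
    ?_, ?_⟩
  · intro n
    exact hsub n ⟨Set.subset_union_left,
      Set.union_subset (hFV n) (Set.singleton_subset_iff.2 (hx n))⟩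
  · intro k L hk hT
    set C : Set X := (⋃ n, F n) ∪ Set.range x with hC
    have hCcnt : C.Countable :=
      (Set.countable_iUnion fun n => (hFfin n).countable).union (Set.countable_range x)
    have hclosed : IsClosed (C \ L.1) := hc _ (hCcnt.mono Set.diff_subset)
    have hLV : L.1 ⊆ (C \ L.1)ᶜ := fun y hy h => h.2 hy
    have hBopen : IsOpen {K : PixleyRoy X | L.1 ⊆ K.1 ∧ K.1 ⊆ (C \ L.1)ᶜ} :=
      TopologicalSpace.isOpen_generateFrom_of_mem
        ⟨L.1, (C \ L.1)ᶜ, L.2.1, L.2.2, hclosed.isOpen_compl, hLV, rfl⟩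
    have hmem : {K : PixleyRoy X | L.1 ⊆ K.1 ∧ K.1 ⊆ (C \ L.1)ᶜ} ∈ nhds L :=
      hBopen.mem_nhds ⟨subset_rfl, hLV⟩
    have hev : ∀ᶠ n in atTop, x (k n) ∈ L.1 := by
      filter_upwards [hT.eventually_mem hmem] with n hn
      have hxc : x (k n) ∈ (C \ L.1)ᶜ := hn.2 (Set.mem_union_right _ rfl)
      by_contra hnot
      exact hxc ⟨Set.mem_union_right _ (Set.mem_range_self _), hnot⟩
    have hfreq : ∃ y ∈ L.1, ∃ᶠ n in atTop, x (k n) = y := by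
      by_contra h
      push_neg at h
      have hev2 : ∀ᶠ n in atTop, ∀ y ∈ L.1, x (k n) ≠ y := by
        rw [Filter.eventually_all_finite L.2.1]
        intro y hy
        have := h y hy
        exact this
      obtain ⟨n, hn1, hn2⟩ := (hev.and hev2).exists
      exact hn2 _ hn1 rfl
    obtain ⟨y, hyL, hfy⟩ := hfreq
    obtain ⟨φ, hφ, hφy⟩ := Filter.extraction_of_frequently_atTop hfy
    refine hdiv (k ∘ φ) y (hk.comp hφ) ?_
    have : (fun n => x ((k ∘ φ) n)) = fun _ => y := funext fun n => hφy n
    rw [this]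
    exact tendsto_const_nhds
end

section
/- Let X be a T1 topological space. Then X is a P-space (every countable intersection of open sets is open) if and only if the Pixley–Roy hyperspace F[X] is a P-space. -/
def PSpace (X : Type*) [TopologicalSpace X] : Prop :=
  ∀ f : ℕ → Set X, (∀ n, IsOpen (f n)) → IsOpen (⋂ n, f n)

lemma pixleyRoy_isOpen_iff {X : Type*} [TopologicalSpace X] (U : Set (PixleyRoy X)) :
    IsOpen U ↔ ∀ H ∈ U, ∃ V : Set X, IsOpen V ∧ H.1 ⊆ V ∧
      {K : PixleyRoy X | H.1 ⊆ K.1 ∧ K.1 ⊆ V} ⊆ U := by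
  constructor
  · intro h
    have h' : TopologicalSpace.GenerateOpen
        {B : Set (PixleyRoy X) | ∃ F V : Set X, F.Finite ∧ F.Nonempty ∧ IsOpen V ∧ F ⊆ V ∧
          B = {H : PixleyRoy X | F ⊆ H.1 ∧ H.1 ⊆ V}} U := h
    induction h' with
    | basic B hB =>
      obtain ⟨F, V, _, _, hVopen, _, rfl⟩ := hB
      rintro H ⟨hFH, hHV⟩
      exact ⟨V, hVopen, hHV, fun K ⟨h1, h2⟩ => ⟨hFH.trans h1, h2⟩⟩
    | univ => exact fun H _ => ⟨Set.univ, isOpen_univ, Set.subset_univ _, fun K _ => trivial⟩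
    | inter U1 U2 hg1 hg2 ih1 ih2 =>
      rintro H ⟨h1, h2⟩
      obtain ⟨V1, hV1, hHV1, hs1⟩ := ih1 hg1 H h1
      obtain ⟨V2, hV2, hHV2, hs2⟩ := ih2 hg2 H h2
      refine ⟨V1 ∩ V2, hV1.inter hV2, Set.subset_inter hHV1 hHV2, fun K ⟨k1, k2⟩ => ?_⟩
      exact ⟨hs1 ⟨k1, k2.trans Set.inter_subset_left⟩,
        hs2 ⟨k1, k2.trans Set.inter_subset_right⟩⟩
    | sUnion S hS ih =>
      rintro H ⟨t, ht, hHt⟩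
      obtain ⟨V, hV, hHV, hs⟩ := ih t ht (hS t ht) H hHt
      exact ⟨V, hV, hHV, fun K hK => ⟨t, ht, hs hK⟩⟩
  · intro h
    choose V hVopen hHV hsub using h
    have : U = ⋃ (H : PixleyRoy X) (hH : H ∈ U),
        {K : PixleyRoy X | H.1 ⊆ K.1 ∧ K.1 ⊆ V H hH} := by
      ext K
      constructor
      · intro hK
        exact Set.mem_iUnion₂.2 ⟨K, hK, Set.Subset.rfl, hHV K hK⟩
      · intro hK
        obtain ⟨H, hH, hm⟩ := Set.mem_iUnion₂.1 hK
        exact hsub H hH hm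
    rw [this]
    refine isOpen_iUnion fun H => isOpen_iUnion fun hH => ?_
    exact TopologicalSpace.GenerateOpen.basic _
      ⟨H.1, V H hH, H.2.1, H.2.2, hVopen H hH, hHV H hH, rfl⟩

/-- A `T1` space `X` is a `P`-space iff its Pixley–Roy hyperspace is a `P`-space. -/
theorem pspace_iff_pixleyRoy_pspace {X : Type*} [TopologicalSpace X] [T1Space X] :
    PSpace X ↔ PSpace (PixleyRoy X) := by
  constructor
  · intro hP f hf
    rw [pixleyRoy_isOpen_iff]
    intro H hH
    have key : ∀ n, ∃ V : Set X, IsOpen V ∧ H.1 ⊆ V ∧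
        {K : PixleyRoy X | H.1 ⊆ K.1 ∧ K.1 ⊆ V} ⊆ f n := by
      intro n
      exact (pixleyRoy_isOpen_iff (f n)).1 (hf n) H (Set.mem_iInter.1 hH n)
    choose V hVopen hHV hsub using key
    refine ⟨⋂ n, V n, hP V hVopen, Set.subset_iInter hHV, fun K ⟨k1, k2⟩ => ?_⟩
    exact Set.mem_iInter.2 fun n => hsub n ⟨k1, k2.trans (Set.iInter_subset V n)⟩
  · intro hP f hf
    rw [isOpen_iff_mem_nhds]
    intro x hx
    -- U_n = {H | H ⊆ f n} is open in PixleyRoy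
    have hUopen : ∀ n, IsOpen {H : PixleyRoy X | H.1 ⊆ f n} := by
      intro n
      rw [pixleyRoy_isOpen_iff]
      intro H hH
      exact ⟨f n, hf n, hH, fun K hK => hK.2⟩
    have hInt := hP _ hUopen
    rw [pixleyRoy_isOpen_iff] at hInt
    have hxmem : (⟨{x}, Set.finite_singleton x, Set.singleton_nonempty x⟩ : PixleyRoy X)
        ∈ ⋂ n, {H : PixleyRoy X | H.1 ⊆ f n} := by
      refine Set.mem_iInter.2 fun n => ?_
      show ({x} : Set X) ⊆ f n
      exact Set.singleton_subset_iff.2 (Set.mem_iInter.1 hx n)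
    obtain ⟨V, hVopen, hxV, hsub⟩ := hInt _ hxmem
    have hVsub : V ⊆ ⋂ n, f n := by
      intro y hy
      have hK : ({x, y} : Set X).Finite ∧ ({x, y} : Set X).Nonempty :=
        ⟨(Set.finite_singleton y).insert x, ⟨x, by simp⟩⟩
      have hmem : (⟨{x, y}, hK⟩ : PixleyRoy X) ∈ ⋂ n, {H : PixleyRoy X | H.1 ⊆ f n} := by
        refine hsub ⟨?_, ?_⟩
        · show ({x} : Set X) ⊆ {x, y}
          simp
        · show ({x, y} : Set X) ⊆ V
          rintro z (rfl | rfl)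
          · exact hxV rfl
          · exact hy
      have := Set.mem_iInter.1 hmem
      exact Set.mem_iInter.2 fun n => this n (by simp)
    exact Filter.mem_of_superset (hVopen.mem_nhds (hxV rfl)) hVsub
end

section
/- Let X be a regular T1 topological space. Then the Pixley–Roy hyperspace F[X] is a P-space and selectively highly divergent if and only if X is a P-space and selectively highly divergent. -/
open Filter Topology

section Aux

variable {Y : Type*} [TopologicalSpace Y]

/-- In a P-space where complements of singletons are open, convergent sequences are
eventually constant. -/
lemma eventually_eq_of_tendsto (hP : PSpace Y) (hT : ∀ b : Y, IsOpen ({b}ᶜ : Set Y))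
    {z : ℕ → Y} {y : Y} (h : Tendsto z atTop (nhds y)) : ∀ᶠ n in atTop, z n = y := by
  classical
  set U : Set Y := ⋂ n, (if z n = y then Set.univ else ({z n}ᶜ : Set Y)) with hUdef
  have hUopen : IsOpen U := by
    refine hP _ fun n => ?_
    by_cases hn : z n = y
    · simp [hn]
    · simpa [hn] using hT (z n)
  have hyU : y ∈ U := by
    refine Set.mem_iInter.2 fun n => ?_
    by_cases hn : z n = y
    · simp [hn]
    · simp only [if_neg hn, Set.mem_compl_iff, Set.mem_singleton_iff]
      exact fun hyz => hn hyz.symm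
  filter_upwards [h (hUopen.mem_nhds hyU)] with n hn
  by_contra hne
  have := Set.mem_iInter.1 hn n
  rw [if_neg hne] at this
  exact this rfl

/-- If every nonempty open set is infinite in a P-space with open complements of
singletons, then the space is SHD. -/
lemma shd_of_infinite (hP : PSpace Y) (hT : ∀ b : Y, IsOpen ({b}ᶜ : Set Y))
    (hInf : ∀ V : Set Y, IsOpen V → V.Nonempty → V.Infinite) : SHD Y := by
  classical
  intro U hUopen hUne
  have key : ∀ (n : ℕ) (s : Finset Y), ∃ a, a ∈ U n ∧ a ∉ s := by
    intro n s
    obtain ⟨a, ha⟩ := ((hInf (U n) (hUopen n) (hUne n)).diff s.finite_toSet).nonempty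
    exact ⟨a, ha.1, fun hc => ha.2 (Finset.mem_coe.2 hc)⟩
  choose f hf1 hf2 using key
  let used : ℕ → Finset Y := fun n => Nat.rec ∅ (fun m acc => insert (f m acc) acc) n
  let x : ℕ → Y := fun n => f n (used n)
  have husedsucc : ∀ n, used (n + 1) = insert (x n) (used n) := fun n => rfl
  have hmono : ∀ m n, m ≤ n → used m ⊆ used n := by
    intro m n hmn
    induction n with
    | zero => simpa [Nat.le_zero.1 hmn] using Finset.Subset.refl _
    | succ k ih =>
      rcases Nat.lt_or_ge m (k + 1) with h | h
      · exact (ih (Nat.lt_succ_iff.1 h)).trans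
          (by rw [husedsucc]; exact Finset.subset_insert _ _)
      · have : m = k + 1 := le_antisymm hmn h
        subst this
        exact Finset.Subset.refl _
  have hmem : ∀ m n, m < n → x m ∈ used n := by
    intro m n h
    have h1 : x m ∈ used (m + 1) := by
      rw [husedsucc]; exact Finset.mem_insert_self _ _
    exact hmono _ _ h h1
  have hinj : Function.Injective x := by
    intro a b hab
    by_contra hne
    rcases lt_or_gt_of_ne hne with h | h
    · have h3 := hmem a b h
      rw [hab] at h3
      exact hf2 b (used b) h3
    · have h3 := hmem b a h
      rw [← hab] at h3
      exact hf2 a (used a) h3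
  refine ⟨x, fun n => hf1 n (used n), ?_⟩
  intro k y hk hten
  have hev := eventually_eq_of_tendsto hP hT hten
  obtain ⟨N, hN⟩ := eventually_atTop.1 hev
  have h1 : x (k N) = y := hN N le_rfl
  have h2 : x (k (N + 1)) = y := hN (N + 1) (Nat.le_succ N)
  have := hinj (h1.trans h2.symm)
  exact absurd (hk (Nat.lt_succ_self N)) (by rw [this]; exact lt_irrefl _)

/-- In an SHD space every nonempty open set is infinite. -/
lemma infinite_of_shd (h : SHD Y) : ∀ V : Set Y, IsOpen V → V.Nonempty → V.Infinite := by
  intro V hV hVne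
  by_contra hfin
  rw [Set.not_infinite] at hfin
  obtain ⟨x, hx, hnc⟩ := h (fun _ => V) (fun _ => hV) (fun _ => hVne)
  have hex : ∃ y ∈ V, {n | x n = y}.Infinite := by
    by_contra hcon
    push_neg at hcon
    have hsub : (Set.univ : Set ℕ) ⊆ ⋃ y ∈ V, {n | x n = y} := fun n _ =>
      Set.mem_biUnion (hx n) rfl
    have : (Set.univ : Set ℕ).Finite :=
      (Set.Finite.biUnion hfin fun y hy => hcon y hy).subset hsub
    exact Set.infinite_univ this
  obtain ⟨y, _, hyInf⟩ := hex
  refine hnc (Nat.nth fun n => x n = y) y (Nat.nth_strictMono hyInf) ?_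
  have : (fun n => x (Nat.nth (fun n => x n = y) n)) = fun _ => y :=
    funext fun n => Nat.nth_mem_of_infinite hyInf n
  rw [this]
  exact tendsto_const_nhds

end Aux

section PR

variable {X : Type*} [TopologicalSpace X]

/-- The base of the Pixley–Roy topology. -/
def prBase (X : Type*) [TopologicalSpace X] : Set (Set (PixleyRoy X)) :=
  {B : Set (PixleyRoy X) | ∃ F V : Set X, F.Finite ∧ F.Nonempty ∧ IsOpen V ∧ F ⊆ V ∧
      B = {H : PixleyRoy X | F ⊆ H.1 ∧ H.1 ⊆ V}}

lemma prBasis : TopologicalSpace.IsTopologicalBasis (prBase X) := by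
  refine ⟨?_, ?_, rfl⟩
  · rintro t1 ⟨F1, V1, hF1, hF1n, hV1, hFV1, rfl⟩ t2 ⟨F2, V2, hF2, hF2n, hV2, hFV2, rfl⟩
      H ⟨⟨h11, h12⟩, h21, h22⟩
    refine ⟨{K : PixleyRoy X | H.1 ⊆ K.1 ∧ K.1 ⊆ V1 ∩ V2},
      ⟨H.1, V1 ∩ V2, H.2.1, H.2.2, hV1.inter hV2, Set.subset_inter h12 h22, rfl⟩,
      ⟨subset_rfl, Set.subset_inter h12 h22⟩, ?_⟩
    rintro K ⟨hK1, hK2⟩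
    exact ⟨⟨h11.trans hK1, hK2.trans Set.inter_subset_left⟩,
      h21.trans hK1, hK2.trans Set.inter_subset_right⟩
  · rw [Set.eq_univ_iff_forall]
    intro H
    refine Set.mem_sUnion.2 ⟨{K : PixleyRoy X | H.1 ⊆ K.1 ∧ K.1 ⊆ Set.univ},
      ⟨H.1, Set.univ, H.2.1, H.2.2, isOpen_univ, Set.subset_univ _, rfl⟩,
      subset_rfl, Set.subset_univ _⟩

lemma pspace_pr (hX : PSpace X) : PSpace (PixleyRoy X) := by
  intro f hf
  rw [prBasis.isOpen_iff]
  intro H hH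
  have hall : ∀ n, ∃ F V : Set X, F.Finite ∧ F.Nonempty ∧ IsOpen V ∧ F ⊆ V ∧
      (F ⊆ H.1 ∧ H.1 ⊆ V) ∧ {K : PixleyRoy X | F ⊆ K.1 ∧ K.1 ⊆ V} ⊆ f n := by
    intro n
    obtain ⟨B, hB, hHB, hBsub⟩ :=
      prBasis.exists_subset_of_mem_open (Set.mem_iInter.1 hH n) (hf n)
    obtain ⟨F, V, h1, h2, h3, h4, rfl⟩ := hB
    exact ⟨F, V, h1, h2, h3, h4, hHB, hBsub⟩
  choose F V hF hFn hV hFV hHmem hsub using hall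
  refine ⟨{K : PixleyRoy X | H.1 ⊆ K.1 ∧ K.1 ⊆ ⋂ n, V n},
    ⟨H.1, ⋂ n, V n, H.2.1, H.2.2, hX V hV,
      Set.subset_iInter fun n => (hHmem n).2, rfl⟩,
    ⟨subset_rfl, Set.subset_iInter fun n => (hHmem n).2⟩, ?_⟩
  rintro K ⟨hK1, hK2⟩
  exact Set.mem_iInter.2 fun n =>
    hsub n ⟨(hHmem n).1.trans hK1, hK2.trans (Set.iInter_subset _ n)⟩

lemma pspace_of_pr (hPR : PSpace (PixleyRoy X)) : PSpace X := by
  intro f hf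
  rw [isOpen_iff_forall_mem_open]
  intro x hx
  have hxn : ∀ n, x ∈ f n := Set.mem_iInter.1 hx
  set O : ℕ → Set (PixleyRoy X) := fun n => {H : PixleyRoy X | {x} ⊆ H.1 ∧ H.1 ⊆ f n}
    with hOdef
  have hOopen : ∀ n, IsOpen (O n) := fun n =>
    prBasis.isOpen ⟨{x}, f n, Set.finite_singleton x, Set.singleton_nonempty x, hf n,
      Set.singleton_subset_iff.2 (hxn n), rfl⟩
  have hint := hPR O hOopen
  have hS : (⟨{x}, Set.finite_singleton x, Set.singleton_nonempty x⟩ : PixleyRoy X)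
      ∈ ⋂ n, O n :=
    Set.mem_iInter.2 fun n => ⟨subset_rfl, Set.singleton_subset_iff.2 (hxn n)⟩
  obtain ⟨B, ⟨F, V, hF, hFn, hV, hFV, rfl⟩, hSB, hBsub⟩ :=
    prBasis.exists_subset_of_mem_open hS hint
  refine ⟨V, ?_, hV, hSB.2 rfl⟩
  intro y hy
  have hxyV : ({x} : Set X) ∪ {y} ⊆ V :=
    Set.union_subset hSB.2 (Set.singleton_subset_iff.2 hy)
  have hmem : (⟨({x} : Set X) ∪ {y},
      (Set.finite_singleton x).union (Set.finite_singleton y),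
      ⟨x, Set.mem_union_left _ rfl⟩⟩ : PixleyRoy X)
      ∈ {K : PixleyRoy X | F ⊆ K.1 ∧ K.1 ⊆ V} :=
    ⟨hSB.1.trans Set.subset_union_left, hxyV⟩
  refine Set.mem_iInter.2 fun n => ?_
  exact (Set.mem_iInter.1 (hBsub hmem) n).2 (Set.mem_union_right _ rfl)

lemma pr_compl_singleton_open [T1Space X] (K : PixleyRoy X) :
    IsOpen ({K}ᶜ : Set (PixleyRoy X)) := by
  rw [isOpen_iff_forall_mem_open]
  intro H hH
  have hne : H ≠ K := hH
  by_cases hsub : H.1 ⊆ K.1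
  · have hexy : ∃ y, y ∈ K.1 ∧ y ∉ H.1 := by
      by_contra hc
      push_neg at hc
      exact hne (Subtype.ext (hsub.antisymm hc))
    obtain ⟨y, hyK, hyH⟩ := hexy
    refine ⟨{L : PixleyRoy X | H.1 ⊆ L.1 ∧ L.1 ⊆ {y}ᶜ}, ?_, ?_, ?_⟩
    · rintro L ⟨hL1, hL2⟩ rfl
      exact hL2 hyK rfl
    · refine prBasis.isOpen ⟨H.1, {y}ᶜ, H.2.1, H.2.2, isOpen_compl_singleton, ?_, rfl⟩
      intro a ha h
      exact hyH ((Set.mem_singleton_iff.1 h) ▸ ha)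
    · refine ⟨subset_rfl, ?_⟩
      intro a ha h
      exact hyH ((Set.mem_singleton_iff.1 h) ▸ ha)
  · refine ⟨{L : PixleyRoy X | H.1 ⊆ L.1 ∧ L.1 ⊆ Set.univ}, ?_, ?_, ?_⟩
    · rintro L ⟨hL1, _⟩ rfl
      exact hsub hL1
    · exact prBasis.isOpen ⟨H.1, Set.univ, H.2.1, H.2.2, isOpen_univ, Set.subset_univ _, rfl⟩
    · exact ⟨subset_rfl, Set.subset_univ _⟩

lemma pr_infinite_of (hX : ∀ V : Set X, IsOpen V → V.Nonempty → V.Infinite) :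
    ∀ O : Set (PixleyRoy X), IsOpen O → O.Nonempty → O.Infinite := by
  rintro O hO ⟨H, hH⟩
  obtain ⟨B, ⟨F, V, hF, hFn, hV, hFV, rfl⟩, hHB, hBsub⟩ :=
    prBasis.exists_subset_of_mem_open hH hO
  have hVinf := hX V hV (hFn.mono hFV)
  have hdiff := hVinf.diff hF
  set φ : X → PixleyRoy X := fun v => ⟨insert v F, hF.insert v, ⟨v, Set.mem_insert v F⟩⟩
    with hφdef
  refine Set.infinite_of_injOn_mapsTo (f := φ) (s := V \ F) ?_ ?_ hdiff
  · intro v hv w hw h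
    have hins : insert v F = insert w F := congrArg Subtype.val h
    have hv' : v ∈ insert w F := hins ▸ Set.mem_insert v F
    rcases hv' with h' | h'
    · exact h'
    · exact absurd h' hv.2
  · intro v hv
    exact hBsub ⟨Set.subset_insert _ _, Set.insert_subset_iff.2 ⟨hv.1, hFV⟩⟩

lemma infinite_of_pr (hPR : ∀ O : Set (PixleyRoy X), IsOpen O → O.Nonempty → O.Infinite) :
    ∀ V : Set X, IsOpen V → V.Nonempty → V.Infinite := by
  rintro V hV ⟨p, hp⟩
  by_contra hfin
  rw [Set.not_infinite] at hfin
  set O : Set (PixleyRoy X) := {H : PixleyRoy X | {p} ⊆ H.1 ∧ H.1 ⊆ V} with hOdef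
  have hOopen : IsOpen O :=
    prBasis.isOpen ⟨{p}, V, Set.finite_singleton p, Set.singleton_nonempty p, hV,
      Set.singleton_subset_iff.2 hp, rfl⟩
  have hOne : O.Nonempty :=
    ⟨⟨{p}, Set.finite_singleton p, Set.singleton_nonempty p⟩,
      subset_rfl, Set.singleton_subset_iff.2 hp⟩
  refine hPR O hOopen hOne ?_
  have hsub : O ⊆ Subtype.val ⁻¹' {A : Set X | A ⊆ V} := fun H hH => hH.2
  exact Set.Finite.subset
    ((hfin.finite_subsets).preimage Subtype.val_injective.injOn) hsub

end PR

/-- For a regular `T1` space `X`, the Pixley–Roy hyperspace is a `P`-space and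
SHD iff `X` is a `P`-space and SHD. -/
theorem pixleyRoy_pspace_shd_iff {X : Type*} [TopologicalSpace X] [T1Space X] [RegularSpace X] :
    (PSpace (PixleyRoy X) ∧ SHD (PixleyRoy X)) ↔ (PSpace X ∧ SHD X) := by
  constructor
  · rintro ⟨hP, hS⟩
    have hPX : PSpace X := pspace_of_pr hP
    exact ⟨hPX, shd_of_infinite hPX (fun b => isOpen_compl_singleton)
      (infinite_of_pr (infinite_of_shd hS))⟩
  · rintro ⟨hPX, hSX⟩
    have hP : PSpace (PixleyRoy X) := pspace_pr hPX
    exact ⟨hP, shd_of_infinite hP pr_compl_singleton_open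
      (pr_infinite_of (infinite_of_shd hSX))⟩
end

section
/- Let X be a topological space in which every nonempty open set is uncountable, and let mX denote the same underlying set equipped with the topology generated by the sets U \ A, where U is open in X and A ⊆ X is countable. Then mX is selectively highly divergent; moreover, if X is Hausdorff then mX is Hausdorff. -/
open Filter Topology

/-- The topology of `mX`: generated by the sets `U \ A` with `U` open in `X` and `A` countable. -/
def mTopology (X : Type*) [TopologicalSpace X] : TopologicalSpace X :=
  TopologicalSpace.generateFrom
    {B : Set X | ∃ U A : Set X, IsOpen U ∧ A.Countable ∧ B = U \ A}

-- every point of an mTopology-open set has a basic neighborhood inside it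
lemma mTopology_basic {X : Type*} [TopologicalSpace X] {V : Set X}
    (hV : TopologicalSpace.GenerateOpen
      {B : Set X | ∃ U A : Set X, IsOpen U ∧ A.Countable ∧ B = U \ A} V) :
    ∀ x ∈ V, ∃ U A : Set X, IsOpen U ∧ A.Countable ∧ x ∈ U \ A ∧ U \ A ⊆ V := by
  induction hV with
  | basic s hs =>
    obtain ⟨U, A, hU, hA, rfl⟩ := hs
    exact fun x hx => ⟨U, A, hU, hA, hx, subset_rfl⟩
  | univ => exact fun x _ => ⟨Set.univ, ∅, isOpen_univ, Set.countable_empty,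
      ⟨trivial, not_false⟩, fun _ _ => trivial⟩
  | inter s t _ _ ihs iht =>
    rintro x ⟨hxs, hxt⟩
    obtain ⟨U₁, A₁, hU₁, hA₁, ⟨hx₁, hx₁'⟩, hsub₁⟩ := ihs x hxs
    obtain ⟨U₂, A₂, hU₂, hA₂, ⟨hx₂, hx₂'⟩, hsub₂⟩ := iht x hxt
    refine ⟨U₁ ∩ U₂, A₁ ∪ A₂, hU₁.inter hU₂, hA₁.union hA₂,
      ⟨⟨hx₁, hx₂⟩, by simp [hx₁', hx₂']⟩, ?_⟩
    rintro y ⟨⟨hy₁, hy₂⟩, hy₃⟩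
    exact ⟨hsub₁ ⟨hy₁, fun h => hy₃ (Or.inl h)⟩, hsub₂ ⟨hy₂, fun h => hy₃ (Or.inr h)⟩⟩
  | sUnion S _ ih =>
    rintro x ⟨s, hs, hxs⟩
    obtain ⟨U, A, hU, hA, hx, hsub⟩ := ih s hs x hxs
    exact ⟨U, A, hU, hA, hx, hsub.trans (Set.subset_sUnion_of_mem hs)⟩

-- recursive choice of pairwise distinct points
noncomputable def seqAux {X : Type*} (U : ℕ → Set X) (hU : ∀ n, (U n).Infinite) : ℕ → X
  | n =>
    ((hU n).diff (Set.finite_range fun m : Fin n => seqAux U hU m.val)).nonempty.choose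
  termination_by n => n
  decreasing_by all_goals exact m.isLt

lemma seqAux_spec {X : Type*} (U : ℕ → Set X) (hU : ∀ n, (U n).Infinite) (n : ℕ) :
    seqAux U hU n ∈ U n \ Set.range (fun m : Fin n => seqAux U hU m.val) := by
  rw [seqAux]
  exact ((hU n).diff (Set.finite_range _)).nonempty.choose_spec

lemma seqAux_injective {X : Type*} (U : ℕ → Set X) (hU : ∀ n, (U n).Infinite) :
    Function.Injective (seqAux U hU) := by
  intro a b hab
  by_contra hne
  wlog hlt : a < b generalizing a b
  · exact this hab.symm (Ne.symm hne) (lt_of_le_of_ne (not_lt.mp hlt) (Ne.symm hne))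
  exact (seqAux_spec U hU b).2 ⟨⟨a, hlt⟩, hab⟩

/-- If every nonempty open subset of `X` is uncountable, then `mX` is SHD;
moreover, if `X` is Hausdorff, so is `mX`. -/
theorem mTopology_shd {X : Type*} [TopologicalSpace X]
    (h : ∀ U : Set X, IsOpen U → U.Nonempty → ¬ U.Countable) :
    @SHD X (mTopology X) ∧ (T2Space X → @T2Space X (mTopology X)) := by
  constructor
  · intro U hUopen hUne
    -- each U n is infinite
    have hInf : ∀ n, (U n).Infinite := by
      intro n
      obtain ⟨x, hx⟩ := hUne n
      obtain ⟨V, A, hV, hA, ⟨hxV, hxA⟩, hsub⟩ := mTopology_basic (hUopen n) x hx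
      intro hfin
      have hVA : (V \ A).Countable := (hfin.subset hsub).countable
      have : V.Countable := by
        have : V ⊆ (V \ A) ∪ A := fun y hy => by
          by_cases hyA : y ∈ A
          · exact Or.inr hyA
          · exact Or.inl ⟨hy, hyA⟩
        exact (hVA.union hA).mono this
      exact h V hV ⟨x, hxV⟩ this
    refine ⟨seqAux U hInf, fun n => (seqAux_spec U hInf n).1, ?_⟩
    intro k y hk hT
    -- the set univ \ (range \ {y}) is an mTopology neighborhood of y
    set A : Set X := Set.range (fun n => seqAux U hInf (k n)) \ {y} with hA
    have hAc : A.Countable := (Set.countable_range _).mono Set.diff_subset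
    have hopen : IsOpen[mTopology X] (Set.univ \ A) :=
      TopologicalSpace.GenerateOpen.basic _ ⟨Set.univ, A, isOpen_univ, hAc, rfl⟩
    have hy : y ∈ Set.univ \ A := ⟨trivial, fun hyA => hyA.2 rfl⟩
    have hnhds : Set.univ \ A ∈ @nhds X (mTopology X) y := by
      rw [@mem_nhds_iff X (mTopology X) y _]
      exact ⟨Set.univ \ A, subset_rfl, hopen, hy⟩
    have hev := hT hnhds
    rw [Filter.mem_map, Filter.mem_atTop_sets] at hev
    obtain ⟨N, hN⟩ := hev
    have h1 : seqAux U hInf (k N) = y := by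
      have := hN N le_rfl
      simp only [Set.mem_preimage, Set.mem_diff, Set.mem_singleton_iff, hA] at this
      by_contra hne
      exact this.2 ⟨⟨N, rfl⟩, hne⟩
    have h2 : seqAux U hInf (k (N+1)) = y := by
      have := hN (N+1) (Nat.le_succ N)
      simp only [Set.mem_preimage, Set.mem_diff, Set.mem_singleton_iff, hA] at this
      by_contra hne
      exact this.2 ⟨⟨N+1, rfl⟩, hne⟩
    have : k N = k (N+1) := seqAux_injective U hInf (h1.trans h2.symm)
    exact absurd this (ne_of_lt (hk (Nat.lt_succ_self N)))
  · intro hT2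
    have hle : mTopology X ≤ ‹TopologicalSpace X› := by
      rw [TopologicalSpace.le_def]
      intro V hV
      exact TopologicalSpace.GenerateOpen.basic _ ⟨V, ∅, hV, Set.countable_empty,
        (Set.diff_empty).symm⟩
    exact @T2Space.of_injective_continuous X X (mTopology X) _ hT2 id
      Function.injective_id (continuous_id_of_le hle)
end

section
/- Let X be a topological space in which every nonempty open set is uncountable, and let mX denote the same underlying set with the topology generated by the sets U \ A for U open in X and A ⊆ X countable. Then every regular open subset of mX (i.e., every set equal to the mX-interior of its mX-closure) is open in the original topology of X. Consequently, if there exists a set open in mX but not open in X, then mX is not semiregular. -/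
section aux

variable {X : Type*} [TopologicalSpace X]

lemma mBasis : @TopologicalSpace.IsTopologicalBasis X (mTopology X)
    {B : Set X | ∃ U A : Set X, IsOpen U ∧ A.Countable ∧ B = U \ A} := by
  refine @TopologicalSpace.IsTopologicalBasis.mk X (mTopology X) _ ?_ ?_ rfl
  · rintro t1 ⟨U, A, hU, hA, rfl⟩ t2 ⟨V, B, hV, hB, rfl⟩ x hx
    exact ⟨(U ∩ V) \ (A ∪ B), ⟨U ∩ V, A ∪ B, hU.inter hV, hA.union hB, rfl⟩,
      ⟨⟨hx.1.1, hx.2.1⟩, fun hc => hc.elim hx.1.2 hx.2.2⟩,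
      fun y hy => ⟨⟨hy.1.1, fun hA' => hy.2 (Or.inl hA')⟩,
        ⟨hy.1.2, fun hB' => hy.2 (Or.inr hB')⟩⟩⟩
  · refine Set.eq_univ_of_univ_subset fun x _ => ?_
    exact ⟨Set.univ \ ∅, ⟨Set.univ, ∅, isOpen_univ, Set.countable_empty, rfl⟩, by simp⟩

lemma mOpen_of_open {U : Set X} (hU : IsOpen U) : @IsOpen X (mTopology X) U :=
  TopologicalSpace.isOpen_generateFrom_of_mem ⟨U, ∅, hU, Set.countable_empty, (Set.diff_empty).symm⟩

lemma mOpen_uncountable (h : ∀ U : Set X, IsOpen U → U.Nonempty → ¬ U.Countable)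
    {W : Set X} (hW : @IsOpen X (mTopology X) W) (hne : W.Nonempty) : ¬ W.Countable := by
  obtain ⟨x, hx⟩ := hne
  obtain ⟨B, ⟨U, A, hU, hA, rfl⟩, hxB, hBW⟩ :=
    @TopologicalSpace.IsTopologicalBasis.exists_subset_of_mem_open X (mTopology X) _
      mBasis x W hx hW
  intro hWc
  have hUc : U.Countable := ((hWc.mono hBW).union hA).mono (by
    intro y hy
    by_cases h' : y ∈ A
    · exact Or.inr h'
    · exact Or.inl ⟨hy, h'⟩)
  exact h U hU ⟨x, hxB.1⟩ hUc

lemma mOpen_diff_countable_nonempty (h : ∀ U : Set X, IsOpen U → U.Nonempty → ¬ U.Countable)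
    {W A : Set X} (hW : @IsOpen X (mTopology X) W) (hne : W.Nonempty) (hA : A.Countable) :
    (W \ A).Nonempty := by
  rw [Set.nonempty_iff_ne_empty]
  intro hemp
  exact mOpen_uncountable h hW hne (hA.mono (Set.diff_eq_empty.mp hemp))

end aux

/-- If every nonempty open subset of `X` is uncountable, then every regular open
subset of `mX` is open in `X`; consequently, if some `mX`-open set is not open in `X`, then
`mX` is not semiregular. -/
theorem mTopology_regularOpen_subset_open {X : Type*} [TopologicalSpace X]
    (h : ∀ U : Set X, IsOpen U → U.Nonempty → ¬ U.Countable) :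
    (∀ S : Set X, S = @interior X (mTopology X) (@closure X (mTopology X) S) → IsOpen S) ∧
    ((∃ V : Set X, @IsOpen X (mTopology X) V ∧ ¬ IsOpen V) →
      ¬ @TopologicalSpace.IsTopologicalBasis X (mTopology X)
        {S : Set X | S = @interior X (mTopology X) (@closure X (mTopology X) S)}) := by
  have key : ∀ S : Set X, S = @interior X (mTopology X) (@closure X (mTopology X) S) →
      IsOpen S := by
    intro S hS
    have hSopen : @IsOpen X (mTopology X) S := by
      rw [hS]; exact @isOpen_interior X (mTopology X) _
    -- mX-closure of the mX-open set S agrees with the X-closure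
    have hcl : @closure X (mTopology X) S = closure S := by
      apply subset_antisymm
      · exact @closure_minimal X (mTopology X) S (closure S) subset_closure
          (@IsClosed.mk X (mTopology X) (closure S) (mOpen_of_open isClosed_closure.isOpen_compl))
      · intro x hx
        rw [@TopologicalSpace.IsTopologicalBasis.mem_closure_iff X (mTopology X) _ mBasis S x]
        rintro o ⟨U, A, hU, hA, rfl⟩ hxo
        have hUS : (U ∩ S).Nonempty := mem_closure_iff.mp hx U hU hxo.1
        have hUSopen : @IsOpen X (mTopology X) (U ∩ S) :=
          @IsOpen.inter X (mTopology X) U S (mOpen_of_open hU) hSopen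
        obtain ⟨y, ⟨⟨hyU, hyS⟩, hyA⟩⟩ :=
          mOpen_diff_countable_nonempty h hUSopen hUS hA
        exact ⟨y, ⟨hyU, hyA⟩, hyS⟩
    -- mX-interior of the X-closed set `closure S` agrees with the X-interior
    have hint : @interior X (mTopology X) (closure S) = interior (closure S) := by
      apply subset_antisymm
      · intro x hx
        obtain ⟨W, hWsub, hWopen, hxW⟩ :=
          (@mem_interior X (mTopology X) x (closure S)).mp hx
        obtain ⟨B, ⟨U, A, hU, hA, rfl⟩, hxB, hBW⟩ :=
          @TopologicalSpace.IsTopologicalBasis.exists_subset_of_mem_open X (mTopology X) _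
            mBasis x W hxW hWopen
        have hUsub : U ⊆ closure S := by
          intro y hy
          rw [mem_closure_iff]
          intro V hV hyV
          obtain ⟨z, ⟨⟨hzV, hzU⟩, hzA⟩⟩ :=
            mOpen_diff_countable_nonempty h (mOpen_of_open (hV.inter hU)) ⟨y, hyV, hy⟩ hA
          have hz : z ∈ closure S := hWsub (hBW ⟨hzU, hzA⟩)
          exact mem_closure_iff.mp hz V hV hzV
        exact mem_interior.mpr ⟨U, hUsub, hU, hxB.1⟩
      · exact @interior_maximal X (mTopology X) (closure S) (interior (closure S))
          interior_subset (mOpen_of_open isOpen_interior)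
    rw [hS, hcl, hint]
    exact isOpen_interior
  refine ⟨key, ?_⟩
  rintro ⟨V, hVm, hVX⟩ hbasis
  obtain ⟨C, hCsub, rfl⟩ :=
    @TopologicalSpace.IsTopologicalBasis.open_eq_sUnion X (mTopology X) _ hbasis V hVm
  exact hVX (isOpen_sUnion fun t ht => key t (hCsub ht))
end

section
/- There exists a subset X of the real line ℝ with the following properties: (1) the cardinality of X is ℵ₁; (2) every nonempty relatively open subset of the subspace X has cardinality ℵ₁ and contains a rational number; and (3) X \ ℚ is not an open subset of the subspace X. -/
/-- There is a subset `X ⊆ ℝ` of cardinality `ℵ₁` such that every nonempty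
relatively open subset of `X` has cardinality `ℵ₁` and contains a rational number, while
`X \ ℚ` is not open in `X`. -/
theorem exists_special_subset_of_real :
    ∃ X : Set ℝ,
      Cardinal.mk X = Cardinal.aleph 1 ∧
      (∀ U : Set X, IsOpen U → U.Nonempty →
        Cardinal.mk U = Cardinal.aleph 1 ∧ ∃ x ∈ U, ∃ q : ℚ, (x : ℝ) = (q : ℝ)) ∧
      ¬ IsOpen {x : X | ¬ ∃ q : ℚ, (x : ℝ) = (q : ℝ)} := by
  classical
  -- choose in each rational interval a set of irrationals of cardinality ℵ₁
  have hT : ∀ pq : ℚ × ℚ, ∃ T : Set ℝ,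
      (T ⊆ {x | x ∈ Set.Ioo (pq.1 : ℝ) (pq.2 : ℝ) ∧ Irrational x}) ∧
      Cardinal.mk T ≤ Cardinal.aleph 1 ∧
      (pq.1 < pq.2 → Cardinal.mk T = Cardinal.aleph 1) := by
    rintro ⟨p, q⟩
    by_cases h : p < q
    · set s : Set ℝ := {x | x ∈ Set.Ioo (p : ℝ) (q : ℝ) ∧ Irrational x} with hs
      have hle : Cardinal.aleph 1 ≤ Cardinal.mk s := by
        by_contra hlt
        push_neg at hlt
        have hIoo : Cardinal.mk (Set.Ioo (p : ℝ) (q : ℝ)) = Cardinal.continuum :=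
          Cardinal.mk_Ioo_real (by exact_mod_cast h)
        have hsub : (Set.Ioo (p : ℝ) (q : ℝ)) ∩ Set.range ((↑) : ℚ → ℝ) ⊆
            Set.Ioo (p : ℝ) (q : ℝ) := Set.inter_subset_left
        have hdiff : Set.Ioo (p : ℝ) (q : ℝ) \
            ((Set.Ioo (p : ℝ) (q : ℝ)) ∩ Set.range ((↑) : ℚ → ℝ)) = s := by
          ext x
          simp only [Set.mem_diff, Set.mem_inter_iff, not_and, hs, Set.mem_setOf_eq,
            Irrational]
          tauto
        have heq := Cardinal.mk_diff_add_mk hsub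
        rw [hdiff, hIoo] at heq
        have h1 : Cardinal.mk s < Cardinal.continuum :=
          lt_of_lt_of_le hlt Cardinal.aleph_one_le_continuum
        have h2 : Cardinal.mk ((Set.Ioo (p : ℝ) (q : ℝ)) ∩ Set.range ((↑) : ℚ → ℝ) : Set ℝ)
            < Cardinal.continuum := by
          refine lt_of_le_of_lt ?_ (Cardinal.aleph0_lt_continuum)
          have : Cardinal.mk (Set.range ((↑) : ℚ → ℝ)) ≤ Cardinal.aleph0 := by
            refine le_trans Cardinal.mk_range_le ?_
            simp
          exact le_trans (Cardinal.mk_le_mk_of_subset Set.inter_subset_right) this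
        exact ne_of_lt (Cardinal.add_lt_of_lt Cardinal.aleph0_le_continuum h1 h2) heq
      obtain ⟨T, hTs, hTmk⟩ := Cardinal.le_mk_iff_exists_subset.mp hle
      exact ⟨T, hTs, le_of_eq hTmk, fun _ => hTmk⟩
    · exact ⟨∅, by simp, by simp, fun hq => absurd hq h⟩
  choose T hTsub hTle hTmk using hT
  set X : Set ℝ := Set.range ((↑) : ℚ → ℝ) ∪ ⋃ pq : ℚ × ℚ, T pq with hX
  have hQX : ∀ r : ℚ, (r : ℝ) ∈ X := fun r => Or.inl ⟨r, rfl⟩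
  have hTX : ∀ pq, T pq ⊆ X := fun pq => le_trans (Set.subset_iUnion T pq) Set.subset_union_right
  -- cardinality of X
  have hXle : Cardinal.mk X ≤ Cardinal.aleph 1 := by
    refine le_trans (Cardinal.mk_union_le _ _) ?_
    have h1 : Cardinal.mk (Set.range ((↑) : ℚ → ℝ)) ≤ Cardinal.aleph 1 := by
      exact le_trans Cardinal.mk_range_le
        (le_trans Cardinal.mk_le_aleph0 (Cardinal.aleph0_le_aleph 1))
    have h2 : Cardinal.mk (⋃ pq : ℚ × ℚ, T pq) ≤ Cardinal.aleph 1 := by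
      refine le_trans (Cardinal.mk_iUnion_le T) ?_
      have : Cardinal.mk (ℚ × ℚ) ≤ Cardinal.aleph0 := by simp
      refine le_trans (mul_le_mul' this (ciSup_le' hTle)) ?_
      rw [Cardinal.aleph0_mul_eq (Cardinal.aleph0_le_aleph 1)]
    calc Cardinal.mk (Set.range ((↑) : ℚ → ℝ)) + Cardinal.mk (⋃ pq : ℚ × ℚ, T pq)
        ≤ Cardinal.aleph 1 + Cardinal.aleph 1 := add_le_add h1 h2
      _ = Cardinal.aleph 1 := Cardinal.add_eq_self (Cardinal.aleph0_le_aleph 1)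
  have hXge : Cardinal.aleph 1 ≤ Cardinal.mk X := by
    rw [← hTmk (0, 1) (by norm_num)]
    exact Cardinal.mk_le_mk_of_subset (hTX (0, 1))
  have hXcard : Cardinal.mk X = Cardinal.aleph 1 := le_antisymm hXle hXge
  -- for any open V and x ∈ V, find a rational interval around x inside V
  have key : ∀ V : Set ℝ, IsOpen V → ∀ x ∈ V, ∃ pq : ℚ × ℚ, pq.1 < pq.2 ∧
      x ∈ Set.Ioo (pq.1 : ℝ) (pq.2 : ℝ) ∧ Set.Ioo (pq.1 : ℝ) (pq.2 : ℝ) ⊆ V := by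
    intro V hV x hx
    obtain ⟨ε, hε, hball⟩ := Metric.isOpen_iff.mp hV x hx
    obtain ⟨p, hp1, hp2⟩ := exists_rat_btwn (show x - ε < x by linarith)
    obtain ⟨q, hq1, hq2⟩ := exists_rat_btwn (show x < x + ε by linarith)
    refine ⟨(p, q), ?_, ⟨hp2, hq1⟩, fun y hy => ?_⟩
    · exact_mod_cast lt_trans hp2 hq1
    · apply hball
      rw [Metric.mem_ball, Real.dist_eq, abs_lt]
      obtain ⟨hy1, hy2⟩ := hy
      constructor <;> linarith
  refine ⟨X, hXcard, ?_, ?_⟩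
  · -- property (2)
    intro U hU hUne
    obtain ⟨V, hV, rfl⟩ := isOpen_induced_iff.mp hU
    obtain ⟨⟨x, hxX⟩, hxU⟩ := hUne
    have hxV : x ∈ V := hxU
    obtain ⟨pq, hpq, hxI, hIV⟩ := key V hV x hxV
    constructor
    · refine le_antisymm (le_trans (Cardinal.mk_set_le _) (le_of_eq hXcard)) ?_
      · rw [← hTmk pq hpq]
        refine Cardinal.mk_le_of_injective (f := fun t : T pq =>
          (⟨⟨(t : ℝ), hTX pq t.2⟩, ?_⟩ : (Subtype.val ⁻¹' V : Set X))) ?_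
        · exact hIV (hTsub pq t.2).1
        · intro a b hab
          have h1 := congrArg Subtype.val hab
          have h2 := congrArg Subtype.val h1
          exact Subtype.ext h2
    · obtain ⟨r, hr1, hr2⟩ := exists_rat_btwn hxI.1
      have hrI : (r : ℝ) ∈ Set.Ioo (pq.1 : ℝ) (pq.2 : ℝ) := ⟨hr1, lt_trans hr2 hxI.2⟩
      exact ⟨⟨(r : ℝ), hQX r⟩, hIV hrI, r, rfl⟩
  · -- property (3)
    intro hopen
    have hne : Set.Nonempty {x : X | ¬ ∃ q : ℚ, (x : ℝ) = (q : ℝ)} := by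
      have : Cardinal.mk (T (0, 1)) = Cardinal.aleph 1 := hTmk (0, 1) (by norm_num)
      have hne' : (T (0, 1)).Nonempty := by
        rw [Set.nonempty_iff_ne_empty]
        intro h
        rw [h] at this
        simp only [Cardinal.mk_emptyCollection] at this
        exact absurd this.symm (Cardinal.aleph_pos 1).ne'
      obtain ⟨t, ht⟩ := hne'
      refine ⟨⟨t, hTX _ ht⟩, ?_⟩
      intro ⟨q, hq⟩
      exact (hTsub _ ht).2 ⟨q, hq.symm⟩
    obtain ⟨⟨t, htX⟩, htS⟩ := hne
    obtain ⟨V, hV, hSV⟩ := isOpen_induced_iff.mp hopen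
    have htV : t ∈ V := by
      have : (⟨t, htX⟩ : X) ∈ Subtype.val ⁻¹' V := by rw [hSV]; exact htS
      exact this
    obtain ⟨pq, hpq, hxI, hIV⟩ := key V hV t htV
    obtain ⟨r, hr1, hr2⟩ := exists_rat_btwn hxI.1
    have hrI : (r : ℝ) ∈ Set.Ioo (pq.1 : ℝ) (pq.2 : ℝ) := ⟨hr1, lt_trans hr2 hxI.2⟩
    have hrS : (⟨(r : ℝ), hQX r⟩ : X) ∈ Subtype.val ⁻¹' V := hIV hrI
    rw [hSV] at hrS
    exact hrS ⟨r, rfl⟩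
end

section
/- For every uncountable cardinal κ there exists a topological space X of cardinality κ such that X is completely Hausdorff (any two distinct points of X are separated by a continuous real-valued function), X is selectively highly divergent, and X is not semiregular. -/
open Filter Topology

universe u

open Set TopologicalSpace

/-- Generators of our topology on `Finset α`. -/
def gens (α : Type u) : Set (Set (Finset α)) :=
  {A | ∃ a : α, A = {s : Finset α | a ∈ s}} ∪
  {A | ∃ a : α, A = {s : Finset α | a ∉ s}} ∪
  {A | Set.Countable Aᶜ}

/-- The topology. -/
def fsTop (α : Type u) : TopologicalSpace (Finset α) :=
  TopologicalSpace.generateFrom (gens α)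

lemma gens_cases {α : Type u} {A : Set (Finset α)} (h : A ∈ gens α) :
    (∃ a : α, A = {s : Finset α | a ∈ s}) ∨ (∃ a : α, A = {s : Finset α | a ∉ s}) ∨
    Set.Countable Aᶜ := by
  rcases h with (h | h) | h
  · exact Or.inl h
  · exact Or.inr (Or.inl h)
  · exact Or.inr (Or.inr h)

lemma isOpen_gens {α : Type u} {A : Set (Finset α)} (h : A ∈ gens α) :
    IsOpen[fsTop α] A :=
  TopologicalSpace.GenerateOpen.basic _ h

/-- Key extension lemma: given finitely many generators compatible with `s` on the
"positive" and "negative" point conditions, all but countably many `c` give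
`insert c s` in the intersection. -/
lemma key {α : Type u} [DecidableEq α] {g : Set (Set (Finset α))} (hgf : g.Finite)
    (hgS : g ⊆ gens α) (s : Finset α)
    (hA : ∀ A ∈ g, ∀ b : α, A = {x : Finset α | b ∈ x} → b ∈ s)
    (hB : ∀ A ∈ g, ∀ b : α, A = {x : Finset α | b ∉ x} → b ∉ s) :
    ∃ bad : Set α, bad.Countable ∧ ∀ c ∉ bad, c ∉ s ∧ insert c s ∈ ⋂₀ g := by
  refine ⟨↑s ∪ ⋃ A ∈ g, {c : α | c ∉ s ∧ insert c s ∉ A}, ?_, ?_⟩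
  · refine (s.countable_toSet).union (Set.Countable.biUnion hgf.countable ?_)
    intro A hAg
    rcases gens_cases (hgS hAg) with ⟨b, rfl⟩ | ⟨b, rfl⟩ | hc
    · have hb := hA _ hAg b rfl
      have : {c : α | c ∉ s ∧ insert c s ∉ {x : Finset α | b ∈ x}} = ∅ := by
        rw [Set.eq_empty_iff_forall_notMem]
        rintro c ⟨-, h2⟩
        exact h2 (Finset.mem_insert_of_mem hb)
      rw [this]; exact Set.countable_empty
    · have hb := hB _ hAg b rfl
      refine Set.Countable.mono ?_ (Set.countable_singleton b)
      rintro c ⟨hcs, hcA⟩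
      simp only [Set.mem_setOf_eq, not_not, Finset.mem_insert] at hcA
      rcases hcA with h | h
      · simp [h]
      · exact absurd h hb
    · refine Set.MapsTo.countable_of_injOn (t := Aᶜ) (f := fun c => insert c s)
        (fun c hc => hc.2) ?_ hc
      intro c hc c' hc' hcc
      simp only [Set.mem_setOf_eq] at hc hc'
      have h2 : insert c s = insert c' s := hcc
      have : c ∈ insert c' s := h2 ▸ Finset.mem_insert_self c s
      rcases Finset.mem_insert.mp this with h' | h'
      · exact h'
      · exact absurd h' hc.1
  · intro c hc
    have hcs' : c ∉ s := fun h => hc (Set.mem_union_left _ h)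
    refine ⟨hcs', fun A hAg => ?_⟩
    by_contra hno
    exact hc (Set.mem_union_right _ (Set.mem_biUnion hAg ⟨hcs', hno⟩))

lemma exists_notMem_countable {α : Type u} [Uncountable α] {T : Set α}
    (hT : T.Countable) : ∃ c : α, c ∉ T := by
  by_contra h
  push_neg at h
  have : (Set.univ : Set α).Countable := hT.mono (fun c _ => h c)
  exact (Set.not_countable_univ) this

/-- Every nonempty open set of our topology is infinite. -/
lemma isOpen_infinite {α : Type u} [Uncountable α] {U : Set (Finset α)}
    (hU : IsOpen[fsTop α] U) (hne : U.Nonempty) : U.Infinite := by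
  classical
  letI : TopologicalSpace (Finset α) := fsTop α
  obtain ⟨x, hx⟩ := hne
  obtain ⟨V, ⟨g, ⟨hgf, hgS⟩, rfl⟩, hxV, hVU⟩ :=
    (TopologicalSpace.isTopologicalBasis_of_subbasis
      (rfl : fsTop α = TopologicalSpace.generateFrom (gens α))).exists_subset_of_mem_open hx hU
  obtain ⟨bad, hbadc, h⟩ := key hgf hgS x
    (fun A hAg b hb => by have := hxV A hAg; rw [hb] at this; exact this)
    (fun A hAg b hb => by have := hxV A hAg; rw [hb] at this; exact this)
  have hbc : (badᶜ : Set α).Infinite := by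
    by_contra hfin
    rw [Set.not_infinite] at hfin
    have : (Set.univ : Set α).Countable := by
      rw [← Set.union_compl_self bad]
      exact hbadc.union hfin.countable
    exact Set.not_countable_univ this
  have hsub : ((fun c => insert c x) '' badᶜ) ⊆ U := by
    rintro _ ⟨c, hc, rfl⟩
    exact hVU ((h c hc).2)
  refine Set.Infinite.mono hsub (Set.Infinite.image ?_ hbc)
  intro c hc c' hc' hcc
  have hcx := (h c hc).1
  have h2 : insert c x = insert c' x := hcc
  have : c ∈ insert c' x := h2 ▸ Finset.mem_insert_self c x
  rcases Finset.mem_insert.mp this with h' | h'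
  · exact h'
  · exact absurd h' hcx

/-- Pick pairwise-distinct points from a sequence of infinite sets. -/
noncomputable def pickSeq {X : Type*} (U : ℕ → Set X) (h : ∀ n, (U n).Infinite) : ℕ → X
  | n => ((h n).diff (Set.finite_range (fun m : Fin n => pickSeq U h m))).nonempty.choose

lemma pickSeq_spec {X : Type*} (U : ℕ → Set X) (h : ∀ n, (U n).Infinite) (n : ℕ) :
    pickSeq U h n ∈ U n \ Set.range (fun m : Fin n => pickSeq U h m) := by
  rw [pickSeq]
  exact ((h n).diff (Set.finite_range (fun m : Fin n => pickSeq U h m))).nonempty.choose_spec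

lemma pickSeq_mem {X : Type*} (U : ℕ → Set X) (h : ∀ n, (U n).Infinite) (n : ℕ) :
    pickSeq U h n ∈ U n := (pickSeq_spec U h n).1

lemma pickSeq_ne {X : Type*} (U : ℕ → Set X) (h : ∀ n, (U n).Infinite) {m n : ℕ}
    (hmn : m < n) : pickSeq U h m ≠ pickSeq U h n := by
  intro he
  exact (pickSeq_spec U h n).2 ⟨⟨m, hmn⟩, he⟩

/-- For every uncountable cardinal `κ` there is a completely Hausdorff,
SHD, non-semiregular space of cardinality `κ`. -/
theorem exists_completelyHausdorff_shd_not_semiregular (κ : Cardinal.{u})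
    (hκ : Cardinal.aleph0 < κ) :
    ∃ (X : Type u) (t : TopologicalSpace X),
      Cardinal.mk X = κ ∧
      (∀ x y : X, x ≠ y → ∃ f : X → ℝ, @Continuous X ℝ t _ f ∧ f x ≠ f y) ∧
      @SHD X t ∧
      ¬ @TopologicalSpace.IsTopologicalBasis X t
        {S : Set X | S = @interior X t (@closure X t S)} := by
  classical
  set α := κ.out with hα
  haveI huc : Uncountable α := by
    rw [← Cardinal.aleph0_lt_mk_iff (α := α)]
    rwa [Cardinal.mk_out]
  haveI : Infinite α := inferInstance
  refine ⟨Finset α, fsTop α, ?_, ?_, ?_, ?_⟩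
  · rw [Cardinal.mk_finset_of_infinite, Cardinal.mk_out]
  · -- completely Hausdorff
    letI : TopologicalSpace (Finset α) := fsTop α
    intro x y hxy
    have : ∃ a : α, ¬ (a ∈ x ↔ a ∈ y) := by
      by_contra h
      push_neg at h
      exact hxy (Finset.ext_iff.mpr fun a => h a)
    obtain ⟨a, ha⟩ := this
    refine ⟨fun z => if a ∈ z then (1 : ℝ) else 0, ?_, ?_⟩
    · refine IsLocallyConstant.continuous ?_
      rw [IsLocallyConstant.iff_exists_open]
      intro z
      by_cases haz : a ∈ z
      · refine ⟨{s : Finset α | a ∈ s}, isOpen_gens (Or.inl (Or.inl ⟨a, rfl⟩)), haz, ?_⟩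
        intro y hy
        simp only [Set.mem_setOf_eq] at hy
        simp [hy, haz]
      · refine ⟨{s : Finset α | a ∉ s}, isOpen_gens (Or.inl (Or.inr ⟨a, rfl⟩)), haz, ?_⟩
        intro y hy
        simp only [Set.mem_setOf_eq] at hy
        simp [hy, haz]
    · by_cases hax : a ∈ x
      · have hay : a ∉ y := fun h => ha ⟨fun _ => h, fun _ => hax⟩
        simp [hax, hay]
      · have hay : a ∈ y := by
          by_contra h
          exact ha ⟨fun h' => absurd h' hax, fun h' => absurd h' h⟩
        simp [hax, hay]
  · -- SHD
    letI : TopologicalSpace (Finset α) := fsTop α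
    intro U hUo hUne
    have hinf : ∀ n, (U n).Infinite := fun n => isOpen_infinite (hUo n) (hUne n)
    refine ⟨pickSeq U hinf, fun n => pickSeq_mem U hinf n, ?_⟩
    intro k y hk ht
    set x := pickSeq U hinf with hx
    set C : Set (Finset α) := (Set.range (fun n => x (k n)) \ {y})ᶜ with hC
    have hCopen : IsOpen C := by
      refine isOpen_gens (Or.inr ?_)
      show Set.Countable Cᶜ
      rw [hC, compl_compl]
      exact (Set.countable_range _).mono Set.diff_subset
    have hyC : y ∈ C := by
      simp [hC]
    have hev : ∀ᶠ n in atTop, x (k n) ∈ C := ht (hCopen.mem_nhds hyC)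
    obtain ⟨N, hN⟩ := Filter.eventually_atTop.mp hev
    have h1 : x (k N) = y := by
      have := hN N le_rfl
      simp only [hC, Set.mem_compl_iff, Set.mem_diff, Set.mem_range, Set.mem_singleton_iff,
        not_and, not_not] at this
      exact this ⟨N, rfl⟩
    have h2 : x (k (N + 1)) = y := by
      have := hN (N + 1) (Nat.le_succ N)
      simp only [hC, Set.mem_compl_iff, Set.mem_diff, Set.mem_range, Set.mem_singleton_iff,
        not_and, not_not] at this
      exact this ⟨N + 1, rfl⟩
    exact pickSeq_ne U hinf (hk (Nat.lt_succ_self N)) (h1.trans h2.symm)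
  · -- not semiregular
    letI : TopologicalSpace (Finset α) := fsTop α
    intro hbasis
    -- a countably infinite set D of elements ≠ a
    obtain ⟨a⟩ : Nonempty α := inferInstance
    set D : Set α := Set.range (fun n : ℕ => Infinite.natEmbedding α n) \ {a} with hD
    have hDc : D.Countable := (Set.countable_range _).mono Set.diff_subset
    have hDi : D.Infinite :=
      Set.Infinite.diff (Set.infinite_range_of_injective (Infinite.natEmbedding α).injective)
        (Set.finite_singleton a)
    have hDa : ∀ c ∈ D, c ≠ a := fun c hc => hc.2
    set Z : Set (Finset α) := (fun c => ({a, c} : Finset α)) '' D with hZ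
    have hZc : Z.Countable := hDc.image _
    set Uo : Set (Finset α) := {s : Finset α | a ∈ s} ∩ Zᶜ with hUo
    have hUopen : IsOpen Uo := by
      refine IsOpen.inter (isOpen_gens (Or.inl (Or.inl ⟨a, rfl⟩))) ?_
      refine isOpen_gens (Or.inr ?_)
      show Set.Countable Zᶜᶜ
      rw [compl_compl]
      exact hZc
    have hs0U : ({a} : Finset α) ∈ Uo := by
      constructor
      · exact Finset.mem_singleton_self a
      · rintro ⟨c, hcD, hc⟩
        have hc' : ({a, c} : Finset α) = {a} := hc
        have : c ∈ ({a} : Finset α) := by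
          rw [← hc']; exact Finset.mem_insert_of_mem (Finset.mem_singleton_self c)
        exact hDa c hcD (Finset.mem_singleton.mp this)
    obtain ⟨Sr, hSrR, hs0Sr, hSrU⟩ := hbasis.exists_subset_of_mem_open hs0U hUopen
    have hSrR' : Sr = interior (closure Sr) := hSrR
    have hSropen : IsOpen Sr := by
      rw [hSrR']; exact isOpen_interior
    obtain ⟨V, ⟨f, ⟨hff, hfS⟩, rfl⟩, hs0V, hVSr⟩ :=
      (TopologicalSpace.isTopologicalBasis_of_subbasis
        (rfl : fsTop α = TopologicalSpace.generateFrom (gens α))).exists_subset_of_mem_open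
        hs0Sr hSropen
    -- the finitely many "negative" constraints in f
    set Bf : Set α := {b : α | {x : Finset α | b ∉ x} ∈ f} with hBf
    have hBfin : Bf.Finite := by
      have hinj : Function.Injective (fun b : α => {x : Finset α | b ∉ x}) := by
        intro b b' h
        by_contra hne
        have h1 : ({b'} : Finset α) ∈ {x : Finset α | b ∉ x} := by
          simp only [Set.mem_setOf_eq, Finset.mem_singleton]
          exact fun hbb => hne hbb
        rw [show {x : Finset α | b ∉ x} = {x : Finset α | b' ∉ x} from h] at h1
        exact h1 (Finset.mem_singleton_self b')
      have : Bf = (fun b : α => {x : Finset α | b ∉ x}) ⁻¹' f := rfl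
      rw [this]
      exact Set.Finite.preimage hinj.injOn hff
    have haBf : a ∉ Bf := by
      intro h
      exact (hs0V _ h) (Finset.mem_singleton_self a)
    obtain ⟨d, hdD, hdBf⟩ : ∃ d, d ∈ D ∧ d ∉ Bf := by
      obtain ⟨d, hd⟩ := (hDi.diff hBfin).nonempty
      exact ⟨d, hd.1, hd.2⟩
    set z : Finset α := {a, d} with hz
    have hzZ : z ∈ Z := ⟨d, hdD, rfl⟩
    set W : Set (Finset α) :=
      {x : Finset α | a ∈ x} ∩ ({x : Finset α | d ∈ x} ∩ ⋂ b ∈ Bf, {x : Finset α | b ∉ x})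
      with hW
    have hWopen : IsOpen W := by
      refine IsOpen.inter (isOpen_gens (Or.inl (Or.inl ⟨a, rfl⟩))) ?_
      refine IsOpen.inter (isOpen_gens (Or.inl (Or.inl ⟨d, rfl⟩))) ?_
      exact Set.Finite.isOpen_biInter hBfin
        (fun b _ => isOpen_gens (Or.inl (Or.inr ⟨b, rfl⟩)))
    have hzW : z ∈ W := by
      refine ⟨(Finset.mem_insert_self a {d} : a ∈ z), (Finset.mem_insert_of_mem (Finset.mem_singleton_self d) : d ∈ z), ?_⟩
      simp only [Set.mem_iInter, Set.mem_setOf_eq]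
      intro b hb
      intro hbz
      rcases Finset.mem_insert.mp hbz with h' | h'
      · exact haBf (h' ▸ hb)
      · exact hdBf ((Finset.mem_singleton.mp h') ▸ hb)
    -- W is contained in the closure of Sr
    have hWcl : W ⊆ closure Sr := by
      intro t ht
      rw [mem_closure_iff]
      intro o ho hto
      obtain ⟨V', ⟨h', ⟨hh'f, hh'S⟩, rfl⟩, htV', hV'o⟩ :=
        (TopologicalSpace.isTopologicalBasis_of_subbasis
          (rfl : fsTop α = TopologicalSpace.generateFrom (gens α))).exists_subset_of_mem_open
          hto ho
      have hA' : ∀ A ∈ f ∪ h', ∀ b : α, A = {x : Finset α | b ∈ x} → b ∈ t := by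
        intro A hAg b hb
        rcases hAg with hAf | hAh
        · have := hs0V A hAf
          rw [hb] at this
          have hba : b = a := Finset.mem_singleton.mp this
          rw [hba]
          exact ht.1
        · have := htV' A hAh
          rw [hb] at this
          exact this
      have hB' : ∀ A ∈ f ∪ h', ∀ b : α, A = {x : Finset α | b ∉ x} → b ∉ t := by
        intro A hAg b hb
        rcases hAg with hAf | hAh
        · have hbBf : b ∈ Bf := by rw [hBf, Set.mem_setOf_eq, ← hb]; exact hAf
          have := ht.2.2
          simp only [Set.mem_iInter, Set.mem_setOf_eq] at this
          exact this b hbBf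
        · have := htV' A hAh
          rw [hb] at this
          exact this
      obtain ⟨bad, hbadc, hkey⟩ := key (hff.union hh'f) (Set.union_subset hfS hh'S) t hA' hB'
      obtain ⟨c, hc⟩ := exists_notMem_countable hbadc
      obtain ⟨-, hmem⟩ := hkey c hc
      rw [Set.sInter_union] at hmem
      exact ⟨insert c t, hV'o hmem.2, hVSr hmem.1⟩
    -- hence z ∈ interior (closure Sr) = Sr ⊆ Uo, contradicting z ∈ Z
    have hzSr : z ∈ Sr := by
      rw [hSrR']
      exact mem_interior.mpr ⟨W, hWcl, hWopen, hzW⟩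
    exact (hSrU hzSr).2 hzZ
end

section
/- For every infinite cardinal κ there exists a topological space X such that X is Hausdorff, zero-dimensional (its clopen sets form a basis), selectively highly divergent, has cardinality κ, possesses a π-base of cardinality at most κ, and admits a pairwise disjoint family of κ-many nonempty open sets. -/
open Filter Topology

universe u

namespace SHD18

open Filter Topology List Set TopologicalSpace


attribute [local instance] Classical.propDecidable

def T : Type := List ℕ

def cone (c : List ℕ) : Set T := {t : List ℕ | c <+: t}

def Sparse (S : Set ℕ) : Prop := ∀ a ∈ S, ∀ b ∈ S, a < b → 2*a+2 < b

def gset (y : List ℕ) (S : Set ℕ) : Set T := {t : List ℕ | ∃ m ∈ S, (y ++ [m]) <+: t}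

/-- identity map viewing a point of `T` as a list -/
def toL (t : T) : List ℕ := t

/-- identity map viewing a list as a point of `T` -/
def toT (l : List ℕ) : T := l

def gens : Set (Set T) := {s | (∃ c, s = cone c) ∨ (∃ y S, Sparse S ∧ s = (gset y S)ᶜ)}

instance : TopologicalSpace T := .generateFrom gens

lemma self_mem_cone (c : List ℕ) : (c : T) ∈ cone c := List.prefix_refl c

lemma cone_mono {c c' : List ℕ} (h : c <+: c') : cone c' ⊆ cone c :=
  fun _ ht => h.trans ht

lemma sparse_singleton (m : ℕ) : Sparse {m} := by
  intro a ha b hb hab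
  rw [Set.mem_singleton_iff] at ha hb
  omega

lemma sparse_empty : Sparse (∅ : Set ℕ) := by intro a ha; simp at ha

/-- From a finite family of sparse sets, infinitely many naturals avoid all of them. -/
lemma sparse_avoid (𝒯 : Finset (Set ℕ)) (h : ∀ S ∈ 𝒯, Sparse S) :
    {m : ℕ | ∀ S ∈ 𝒯, m ∉ S}.Infinite := by
  apply Set.infinite_of_forall_exists_gt
  intro n
  classical
  set N := max n 𝒯.card with hN
  set I : Finset ℕ := Finset.Ioc N (2*N+2) with hI
  set bad : Finset ℕ := I.filter (fun m => ∃ S ∈ 𝒯, m ∈ S) with hbad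
  have hcard : bad.card ≤ 𝒯.card := by
    have : ∀ m ∈ bad, ∃ S ∈ 𝒯, m ∈ S := by
      intro m hm
      exact (Finset.mem_filter.1 hm).2
    choose F hF1 hF2 using this
    apply Finset.card_le_card_of_injOn (fun m => if hm : m ∈ bad then F m hm else ∅)
    · intro m hm
      rw [Finset.mem_coe] at hm
      simp only [dif_pos hm]
      exact hF1 m hm
    · intro a ha b hb hab
      simp only [Finset.mem_coe] at ha hb
      simp only [dif_pos ha, dif_pos hb] at hab
      by_contra hne
      rcases Ne.lt_or_gt hne with hlt | hlt
      · have h1 : a ∈ F a ha := hF2 a ha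
        have h2 : b ∈ F a ha := by rw [hab]; exact hF2 b hb
        have := h (F a ha) (hF1 a ha) a h1 b h2 hlt
        have haI : a ∈ I := (Finset.mem_filter.1 ha).1
        have hbI : b ∈ I := (Finset.mem_filter.1 hb).1
        rw [hI, Finset.mem_Ioc] at haI hbI
        omega
      · have h1 : b ∈ F a ha := by rw [hab]; exact hF2 b hb
        have h2 : a ∈ F a ha := hF2 a ha
        have := h (F a ha) (hF1 a ha) b h1 a h2 hlt
        have haI : a ∈ I := (Finset.mem_filter.1 ha).1
        have hbI : b ∈ I := (Finset.mem_filter.1 hb).1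
        rw [hI, Finset.mem_Ioc] at haI hbI
        omega
  have hIcard : I.card = N + 2 := by
    rw [hI, Nat.card_Ioc]
    omega
  have : bad ⊂ I := by
    refine Finset.lt_iff_ssubset.1 (lt_of_le_of_ne (Finset.le_iff_subset.2 (Finset.filter_subset _ _)) ?_)
    intro heq
    rw [heq, hIcard] at hcard
    have h2 : 𝒯.card ≤ N := le_max_right _ _
    omega
  obtain ⟨m, hmI, hmbad⟩ := Finset.exists_of_ssubset this
  refine ⟨m, ?_, ?_⟩
  · intro S hS hmS
    exact hmbad (Finset.mem_filter.2 ⟨hmI, ⟨S, hS, hmS⟩⟩)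
  · rw [hI, Finset.mem_Ioc] at hmI
    omega

/-- every infinite set of naturals contains an infinite sparse subset -/
lemma exists_sparse_subset {V : Set ℕ} (hV : V.Infinite) :
    ∃ S : Set ℕ, S ⊆ V ∧ S.Infinite ∧ Sparse S := by
  classical
  have step : ∀ a : ℕ, ∃ b ∈ V, a < b := hV.exists_gt
  let f : ℕ → ℕ := fun n => Nat.rec (step 0).choose (fun _ prev => (step (2*prev+2)).choose) n
  have hfV : ∀ n, f n ∈ V := by
    intro n
    cases n with
    | zero => exact (step 0).choose_spec.1
    | succ m => exact (step (2 * f m + 2)).choose_spec.1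
  have hfgt : ∀ n, 2 * f n + 2 < f (n+1) := by
    intro n
    exact (step (2 * f n + 2)).choose_spec.2
  have hmono : StrictMono f := strictMono_nat_of_lt_succ (fun n => by have := hfgt n; omega)
  refine ⟨Set.range f, ?_, ?_, ?_⟩
  · rintro _ ⟨n, rfl⟩; exact hfV n
  · exact Set.infinite_range_of_injective hmono.injective
  · rintro _ ⟨i, rfl⟩ _ ⟨j, rfl⟩ hij
    have hij' : i < j := by
      by_contra hc
      push_neg at hc
      exact absurd (hmono.le_iff_le.2 hc) (by omega)
    calc 2 * f i + 2 < f (i+1) := hfgt i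
    _ ≤ f j := hmono.le_iff_le.2 hij'


lemma isOpen_cone (c : List ℕ) : IsOpen (cone c) :=
  isOpen_generateFrom_of_mem (Or.inl ⟨c, rfl⟩)

lemma isOpen_compl_gset {y : List ℕ} {S : Set ℕ} (hS : Sparse S) : IsOpen (gset y S)ᶜ :=
  isOpen_generateFrom_of_mem (Or.inr ⟨y, S, hS, rfl⟩)

lemma gset_eq_union (y : List ℕ) (S : Set ℕ) :
    gset y S = ⋃ m ∈ S, cone (y ++ [m]) := by
  ext t
  constructor
  · rintro ⟨m, hm, h⟩
    exact Set.mem_biUnion hm h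
  · intro h
    rcases Set.mem_iUnion₂.1 h with ⟨m, hm, h⟩
    exact ⟨m, hm, h⟩

lemma isOpen_gset (y : List ℕ) (S : Set ℕ) : IsOpen (gset y S) := by
  rw [gset_eq_union]
  exact isOpen_biUnion fun m _ => isOpen_cone _

/-- helper: the digit of `t` just after the prefix `y`. -/
lemma getD_append (y r : List ℕ) (d : ℕ) : (y ++ d :: r).getD y.length 0 = d := by
  rw [List.getD_eq_getElem?_getD]
  rw [List.getElem?_append_right (le_refl _)]
  simp

lemma prefix_snoc_of_strict_prefix {y t : List ℕ} (h : y <+: t) (hne : y ≠ t) :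
    y ++ [t.getD y.length 0] <+: t := by
  obtain ⟨r, rfl⟩ := h
  cases r with
  | nil => simp at hne
  | cons d r =>
    rw [getD_append]
    exact ⟨r, by simp⟩

lemma not_self_mem_gset (y : List ℕ) (S : Set ℕ) : (y : T) ∉ gset y S := by
  rintro ⟨m, _, hm⟩
  have := hm.length_le
  simp at this

lemma isClosed_cone (c : List ℕ) : IsClosed (cone c) := by
  rw [← isOpen_compl_iff]
  have key : (cone c)ᶜ = ⋃ (t : List ℕ) (_ : ¬ c <+: t),
      (if t <+: c then (gset t {c.getD t.length 0})ᶜ else cone t) := by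
    apply Set.Subset.antisymm
    · intro u hu
      have hu' : ¬ c <+: (u : List ℕ) := hu
      refine Set.mem_iUnion.2 ⟨u, Set.mem_iUnion.2 ⟨hu', ?_⟩⟩
      by_cases h : (u : List ℕ) <+: c
      · simp only [if_pos h]
        exact not_self_mem_gset _ _
      · simp only [if_neg h]
        exact self_mem_cone u
    · intro u hu
      simp only [Set.mem_iUnion] at hu
      obtain ⟨t, ht, hmem⟩ := hu
      by_cases h : t <+: c
      · simp only [if_pos h] at hmem
        intro hcu
        have hne : t ≠ c := by
          rintro rfl; exact ht (List.prefix_refl _)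
        have h1 : t ++ [c.getD t.length 0] <+: c := prefix_snoc_of_strict_prefix h hne
        exact hmem ⟨c.getD t.length 0, Set.mem_singleton _, h1.trans hcu⟩
      · simp only [if_neg h] at hmem
        intro hcu
        rcases List.prefix_or_prefix_of_prefix hcu hmem with h1 | h1
        · exact ht h1
        · exact h h1
  rw [key]
  apply isOpen_iUnion
  intro t
  apply isOpen_iUnion
  intro _
  by_cases h : t <+: c
  · simp only [if_pos h]; exact isOpen_compl_gset (sparse_singleton _)
  · simp only [if_neg h]; exact isOpen_cone t

lemma isClopen_cone (c : List ℕ) : IsClopen (cone c) := ⟨isClosed_cone c, isOpen_cone c⟩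

lemma isClopen_compl_gset {y : List ℕ} {S : Set ℕ} (hS : Sparse S) : IsClopen (gset y S)ᶜ :=
  ⟨isClosed_compl_iff.mpr (isOpen_gset y S), isOpen_compl_gset hS⟩

lemma isClopen_of_mem_gens {s : Set T} (hs : s ∈ gens) : IsClopen s := by
  rcases hs with ⟨c, rfl⟩ | ⟨y, S, hS, rfl⟩
  · exact isClopen_cone c
  · exact isClopen_compl_gset hS


/-- Core case analysis: appending one good digit `a` stabilizes the complement of a gset. -/
lemma cone_snoc_subset_compl_gset {t y : List ℕ} {S : Set ℕ} {a : ℕ}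
    (ht : (t : T) ∉ gset y S) (ha1 : a ∉ S) (ha2 : a ≠ y.getD t.length 0) :
    cone (t ++ [a]) ⊆ (gset y S)ᶜ := by
  intro u hu
  rintro ⟨m, hmS, hpre⟩
  have htu : t ++ [a] <+: u := hu
  rcases List.prefix_or_prefix_of_prefix hpre htu with h1 | h1
  · -- y ++ [m] <+: t ++ [a]
    have hlen : (y ++ [m]).length ≤ (t ++ [a]).length := h1.length_le
    simp only [List.length_append, List.length_singleton] at hlen
    rcases lt_or_eq_of_le hlen with hlt | heq
    · -- y ++ [m] <+: t
      have : y ++ [m] <+: t := by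
        apply List.prefix_of_prefix_length_le h1 (List.prefix_append t [a])
        simp only [List.length_append, List.length_singleton]
        omega
      exact ht ⟨m, hmS, this⟩
    · -- same length: equal, so a = m ∈ S
      have heq2 : y ++ [m] = t ++ [a] := h1.eq_of_length (by simpa using heq)
      have hym : y.length = t.length := by
        have := congrArg List.length heq2
        simp only [List.length_append, List.length_singleton] at this
        omega
      obtain ⟨hy, hma⟩ := List.append_inj heq2 (by omega)
      have : m = a := by simpa using hma
      exact ha1 (this ▸ hmS)
  · -- t ++ [a] <+: y ++ [m]
    have hlen : (t ++ [a]).length ≤ (y ++ [m]).length := h1.length_le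
    simp only [List.length_append, List.length_singleton] at hlen
    rcases lt_or_eq_of_le hlen with hlt | heq
    · -- t ++ [a] <+: y, so y.getD t.length 0 = a
      have hpre2 : t ++ [a] <+: y := by
        apply List.prefix_of_prefix_length_le h1 (List.prefix_append y [m])
        simp only [List.length_append, List.length_singleton]
        omega
      obtain ⟨r, hr⟩ := hpre2
      have : y.getD t.length 0 = a := by
        rw [← hr, List.append_assoc]
        simpa using getD_append t (r) a
      exact ha2 this.symm
    · have heq2 : t ++ [a] = y ++ [m] := h1.eq_of_length (by simpa using heq)
      obtain ⟨hy, hma⟩ := List.append_inj heq2 (by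
        have := congrArg List.length heq2
        simp only [List.length_append, List.length_singleton] at this
        omega)
      have : a = m := by simpa using hma
      exact ha1 (this ▸ hmS)

/-- descriptor of a generator -/
noncomputable def desc (s : Set T) : List ℕ × Set ℕ :=
  if h : ∃ y S, Sparse S ∧ s = (gset y S)ᶜ then
    (h.choose, h.choose_spec.choose)
  else ([], ∅)

lemma desc_spec {s : Set T} (h : ∃ y S, Sparse S ∧ s = (gset y S)ᶜ) :
    Sparse (desc s).2 ∧ s = (gset (desc s).1 (desc s).2)ᶜ := by
  rw [desc, dif_pos h]
  exact ⟨h.choose_spec.choose_spec.1, h.choose_spec.choose_spec.2⟩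

lemma desc_sparse (s : Set T) : Sparse (desc s).2 := by
  by_cases h : ∃ y S, Sparse S ∧ s = (gset y S)ᶜ
  · exact (desc_spec h).1
  · rw [desc, dif_neg h]
    exact sparse_empty

/-- Main extension lemma: every point of a finite intersection of generators
has an extension whose cone is inside the intersection. -/
lemma exists_cone_subset_sInter {f : Set (Set T)} (hfin : f.Finite) (hsub : f ⊆ gens)
    {t : T} (ht : ∀ s ∈ f, t ∈ s) :
    ∃ c : List ℕ, toL t <+: c ∧ cone c ⊆ ⋂₀ f := by
  classical
  set G : Finset (List ℕ × Set ℕ) := hfin.toFinset.image desc with hG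
  set 𝒯 : Finset (Set ℕ) := G.image Prod.snd with h𝒯
  have hsp : ∀ S ∈ 𝒯, Sparse S := by
    intro S hS
    rw [h𝒯] at hS
    obtain ⟨p, hp, rfl⟩ := Finset.mem_image.1 hS
    rw [hG] at hp
    obtain ⟨s, _, rfl⟩ := Finset.mem_image.1 hp
    exact desc_sparse s
  have hinf := sparse_avoid 𝒯 hsp
  set bans : Finset ℕ := G.image (fun p => p.1.getD (toL t).length 0) with hbans
  obtain ⟨a, haS, hagt⟩ := hinf.exists_gt (bans.sup id)
  have hnban : ∀ p ∈ G, a ≠ p.1.getD (toL t).length 0 := by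
    intro p hp heq
    have : p.1.getD (toL t).length 0 ∈ bans :=
      Finset.mem_image.2 ⟨p, hp, rfl⟩
    have := Finset.le_sup (f := id) this
    simp only [id] at this
    omega
  refine ⟨toL t ++ [a], List.prefix_append _ _, ?_⟩
  intro u hu
  rw [Set.mem_sInter]
  intro s hs
  rcases hsub hs with ⟨c₀, rfl⟩ | hneg
  · have hu' : toL t ++ [a] <+: u := hu
    exact (ht _ hs).trans ((List.prefix_append (toL t) [a]).trans hu')
  · have hmem : desc s ∈ G := by
      rw [hG]
      exact Finset.mem_image.2 ⟨s, hfin.mem_toFinset.2 hs, rfl⟩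
    have hspec := desc_spec hneg
    rw [hspec.2]
    have hts : (t : T) ∉ gset (desc s).1 (desc s).2 := by
      have := ht s hs
      rw [hspec.2] at this
      exact this
    have haS' : a ∉ (desc s).2 := by
      apply haS
      rw [h𝒯]
      exact Finset.mem_image.2 ⟨desc s, hmem, rfl⟩
    exact cone_snoc_subset_compl_gset hts haS' (hnban _ hmem) hu

/-- π-base lemma : every nonempty open set contains a cone above any of its points. -/
lemma exists_cone_subset_of_isOpen {U : Set T} (hU : IsOpen U) {t : T} (ht : t ∈ U) :
    ∃ c : List ℕ, toL t <+: c ∧ cone c ⊆ U := by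
  have hbasis := TopologicalSpace.isTopologicalBasis_of_subbasis (s := gens) rfl
  obtain ⟨B, hB, htB, hBU⟩ := hbasis.exists_subset_of_mem_open ht hU
  obtain ⟨f, ⟨hfin, hsub⟩, rfl⟩ := hB
  obtain ⟨c, hc1, hc2⟩ := exists_cone_subset_sInter hfin hsub (Set.mem_sInter.1 htB)
  exact ⟨c, hc1, hc2.trans hBU⟩

lemma t2_sep (x y : List ℕ) (hxy : x ≠ y) :
    ∃ U V : Set T, IsOpen U ∧ IsOpen V ∧ (x : T) ∈ U ∧ (y : T) ∈ V ∧ Disjoint U V := by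
  by_cases h1 : x <+: y
  · obtain ⟨r, hr⟩ := h1
    match r, hr with
    | [], hr => exact absurd (by simpa using hr) hxy
    | d :: r, hr =>
      refine ⟨(gset x {d})ᶜ, cone (x ++ [d]), isOpen_compl_gset (sparse_singleton d),
        isOpen_cone _, not_self_mem_gset _ _, ⟨r, by simpa using hr⟩, ?_⟩
      rw [Set.disjoint_left]
      intro u hu1 hu2
      exact hu1 ⟨d, Set.mem_singleton d, hu2⟩
  · by_cases h2 : y <+: x
    · obtain ⟨r, hr⟩ := h2
      match r, hr with
      | [], hr => exact absurd (by simpa using hr) (Ne.symm hxy)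
      | d :: r, hr =>
        refine ⟨cone (y ++ [d]), (gset y {d})ᶜ, isOpen_cone _,
          isOpen_compl_gset (sparse_singleton d), ⟨r, by simpa using hr⟩,
          not_self_mem_gset _ _, ?_⟩
        rw [Set.disjoint_left]
        intro u hu1 hu2
        exact hu2 ⟨d, Set.mem_singleton d, hu1⟩
    · refine ⟨cone x, cone y, isOpen_cone _, isOpen_cone _, self_mem_cone x,
        self_mem_cone y, ?_⟩
      rw [Set.disjoint_left]
      intro u hu1 hu2
      rcases List.prefix_or_prefix_of_prefix (hu1 : x <+: u) (hu2 : y <+: u) with h | h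
      · exact h1 h
      · exact h2 h

instance : T2Space T := by
  constructor
  intro x y hxy
  exact t2_sep x y hxy

lemma clopen_basis_T : IsTopologicalBasis {s : Set T | IsClopen s} := by
  apply isTopologicalBasis_of_isOpen_of_nhds
  · exact fun u hu => hu.2
  · intro a u hau hu
    have hbasis := TopologicalSpace.isTopologicalBasis_of_subbasis (s := gens) rfl
    obtain ⟨B, hB, haB, hBu⟩ := hbasis.exists_subset_of_mem_open hau hu
    obtain ⟨f, ⟨hfin, hsub⟩, rfl⟩ := hB
    refine ⟨⋂₀ f, ?_, haB, hBu⟩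
    rw [Set.sInter_eq_biInter]
    exact hfin.isClopen_biInter (fun s hs => isClopen_of_mem_gens (hsub hs))

lemma infinite_Ici_nat (N : ℕ) : {j : ℕ | N ≤ j}.Infinite := by
  apply Set.infinite_of_forall_exists_gt
  intro a
  exact ⟨max N a + 1, by simp only [Set.mem_setOf_eq]; omega, by omega⟩

lemma getLast?_concat' (l : List ℕ) (a : ℕ) : (l ++ [a]).getLast? = some a := by
  simp [List.getLast?_append]

/-- The key divergence lemma: a sequence of the form `b j ++ [e j]` with `e` strictly
monotone converges nowhere. -/
lemma no_conv (b : ℕ → List ℕ) (e : ℕ → ℕ) (he : StrictMono e) (y : T) :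
    ¬ Tendsto (fun j => toT (b j ++ [e j])) atTop (𝓝 y) := by
  intro htd
  set w : ℕ → List ℕ := fun j => b j ++ [e j] with hw
  have hinj : Function.Injective w := by
    intro i j hij
    apply he.injective
    have h1 : (w i).getLast? = (w j).getLast? := by rw [hij]
    rw [hw] at h1
    simp only [getLast?_concat'] at h1
    exact Option.some_injective _ h1
  have h1 : ∀ᶠ j in atTop, toL y <+: w j := by
    have := htd ((isOpen_cone (toL y)).mem_nhds (self_mem_cone (toL y)))
    exact Filter.mem_map.1 this
  have h2 : ∀ᶠ j in atTop, w j ≠ toL y := by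
    have hfin : {j | w j = toL y}.Finite := by
      apply Set.Subsingleton.finite
      intro i hi j hj
      exact hinj (hi.trans hj.symm)
    rw [← Nat.cofinite_eq_atTop]
    exact Set.Finite.eventually_cofinite_notMem hfin
  obtain ⟨N, hN⟩ := (h1.and h2).exists_forall_of_atTop
  set d : ℕ → ℕ := fun j => (w j).getD (toL y).length 0 with hd
  have key : ∀ j, N ≤ j → toL y ++ [d j] <+: w j := by
    intro j hj
    exact prefix_snoc_of_strict_prefix (hN j hj).1 (Ne.symm (hN j hj).2)
  have main : ∃ S : Set ℕ, Sparse S ∧ {j | N ≤ j ∧ d j ∈ S}.Infinite := by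
    by_cases hrec : ∃ m, {j | N ≤ j ∧ d j = m}.Infinite
    · obtain ⟨m, hm⟩ := hrec
      refine ⟨{m}, sparse_singleton m, ?_⟩
      have heq : {j | N ≤ j ∧ d j ∈ ({m} : Set ℕ)} = {j | N ≤ j ∧ d j = m} := by
        ext j; simp
      rw [heq]
      exact hm
    · push_neg at hrec
      have hV : (d '' {j | N ≤ j}).Infinite := by
        intro hVfin
        have : {j | N ≤ j} ⊆ ⋃ m ∈ d '' {j | N ≤ j}, {j | N ≤ j ∧ d j = m} := by
          intro j hj
          exact Set.mem_biUnion (Set.mem_image_of_mem d hj) ⟨hj, rfl⟩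
        have hfin : (⋃ m ∈ d '' {j | N ≤ j}, {j | N ≤ j ∧ d j = m}).Finite :=
          hVfin.biUnion (fun m _ => hrec m)
        exact (infinite_Ici_nat N) (hfin.subset this)
      obtain ⟨S, hSV, hSinf, hSsp⟩ := exists_sparse_subset hV
      refine ⟨S, hSsp, ?_⟩
      intro hfin
      apply hSinf
      have : S ⊆ d '' {j | N ≤ j ∧ d j ∈ S} := by
        intro v hv
        obtain ⟨j, hj, rfl⟩ := hSV hv
        exact Set.mem_image_of_mem d ⟨hj, hv⟩
      exact ((hfin.image d).subset this)
  obtain ⟨S, hSsp, hSinf⟩ := main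
  have hout : ∀ᶠ j in atTop, (w j : T) ∈ (gset (toL y) S)ᶜ := by
    have := htd ((isOpen_compl_gset hSsp).mem_nhds (not_self_mem_gset (toL y) S))
    exact Filter.mem_map.1 this
  obtain ⟨M, hM⟩ := hout.exists_forall_of_atTop
  obtain ⟨j, hjmem, hjgt⟩ := hSinf.exists_gt (max N M)
  have hjN : N ≤ j := le_trans (le_max_left _ _) (le_of_lt hjgt)
  have hjM : M ≤ j := le_trans (le_max_right _ _) (le_of_lt hjgt)
  exact hM j hjM ⟨d j, hjmem.2, key j hjN⟩



/-! ### The final space -/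

variable (κ : Cardinal.{u})

def D : Type u := κ.out

instance : TopologicalSpace (D κ) := ⊥
instance : DiscreteTopology (D κ) := ⟨rfl⟩

def X : Type u := D κ × ULift.{u} T

instance : TopologicalSpace (X κ) := inferInstanceAs (TopologicalSpace (D κ × ULift.{u} T))

instance : T2Space (X κ) := inferInstanceAs (T2Space (D κ × ULift.{u} T))

lemma isOpen_section {u : Set (X κ)} (hu : IsOpen u) (α : D κ) :
    IsOpen {t : T | ((α, ULift.up t) : X κ) ∈ u} := by
  have hc : Continuous (fun t : T => ((α, ULift.up t) : X κ)) :=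
    continuous_const.prodMk continuous_uliftUp
  exact hu.preimage hc

lemma clopen_basis_X : IsTopologicalBasis {s : Set (X κ) | IsClopen s} := by
  apply isTopologicalBasis_of_isOpen_of_nhds
  · exact fun u hu => hu.2
  · rintro ⟨α, v⟩ u hau hu
    have hsec := isOpen_section κ hu α
    have hmem : v.down ∈ {t : T | ((α, ULift.up t) : X κ) ∈ u} := hau
    obtain ⟨C, hC, hmemC, hsub⟩ := clopen_basis_T.exists_subset_of_mem_open hmem hsec
    refine ⟨{α} ×ˢ (ULift.down ⁻¹' C), ?_, ⟨rfl, hmemC⟩, ?_⟩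
    · exact (isClopen_discrete {α}).prod (hC.preimage continuous_uliftDown)
    · rintro ⟨β, z⟩ ⟨hβ, hz⟩
      obtain rfl : β = α := hβ
      exact hsub hz

lemma SHD_X : SHD (X κ) := by
  intro U hUo hUne
  choose p hp using hUne
  have hsec : ∀ n, IsOpen {t : T | (((p n).1, ULift.up t) : X κ) ∈ U n} :=
    fun n => isOpen_section κ (hUo n) _
  have hmem : ∀ n, ((p n).2).down ∈ {t : T | (((p n).1, ULift.up t) : X κ) ∈ U n} :=
    fun n => hp n
  have hcone := fun n => exists_cone_subset_of_isOpen (hsec n) (hmem n)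
  choose c _ hcsub using hcone
  refine ⟨fun n => (((p n).1, ULift.up (toT (c n ++ [n+1]))) : X κ), ?_, ?_⟩
  · intro n
    exact hcsub n (List.prefix_append (c n) [n+1])
  · intro k y hk htd
    have h2 : Tendsto (fun j => ((((p (k j)).1, ULift.up (toT (c (k j) ++ [k j + 1]))) : X κ)).2.down)
        atTop (𝓝 y.2.down) :=
      (continuous_uliftDown.tendsto y.2).comp ((continuous_snd.tendsto y).comp htd)
    have h3 : Tendsto (fun j => toT (c (k j) ++ [k j + 1])) atTop (𝓝 y.2.down) := h2
    exact no_conv (fun j => c (k j)) (fun j => k j + 1)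
      (fun a b h => Nat.add_lt_add_right (hk h) 1) y.2.down h3

lemma mk_X : Cardinal.mk (X κ) = κ * Cardinal.aleph0 := by
  have h1 : Cardinal.mk (D κ) = κ := Cardinal.mk_out κ
  have hT : Cardinal.mk T = Cardinal.aleph0 := Cardinal.mk_list_eq_aleph0 ℕ
  have h2 : Cardinal.mk (ULift.{u} T) = Cardinal.aleph0 := by
    rw [Cardinal.mk_uLift, hT, Cardinal.lift_aleph0]
  calc Cardinal.mk (X κ) = Cardinal.mk (D κ × ULift.{u} T) := rfl
  _ = Cardinal.mk (D κ) * Cardinal.mk (ULift.{u} T) := by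
        rw [Cardinal.mk_prod, Cardinal.lift_id, Cardinal.lift_id]
  _ = κ * Cardinal.aleph0 := by rw [h1, h2]

lemma exists_piBase :
    ∃ B : Set (Set (X κ)), Cardinal.mk B ≤ Cardinal.mk (X κ) ∧
      (∀ b ∈ B, IsOpen b ∧ b.Nonempty) ∧
      ∀ U : Set (X κ), IsOpen U → U.Nonempty → ∃ b ∈ B, b ⊆ U := by
  refine ⟨Set.range (fun q : D κ × ULift.{u} T =>
    ({q.1} ×ˢ (ULift.down ⁻¹' cone (toL q.2.down)) : Set (X κ))), ?_, ?_, ?_⟩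
  · exact Cardinal.mk_range_le
  · rintro b ⟨q, rfl⟩
    constructor
    · exact (isOpen_discrete _).prod ((isOpen_cone _).preimage continuous_uliftDown)
    · exact ⟨(q.1, q.2), rfl, self_mem_cone _⟩
  · intro U hU hne
    obtain ⟨⟨α, v⟩, hmem⟩ := hne
    have hsec := isOpen_section κ hU α
    have hv : v.down ∈ {t : T | ((α, ULift.up t) : X κ) ∈ U} := hmem
    obtain ⟨c, _, hsub⟩ := exists_cone_subset_of_isOpen hsec hv
    refine ⟨{α} ×ˢ (ULift.down ⁻¹' cone c), ⟨(α, ULift.up (toT c)), rfl⟩, ?_⟩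
    rintro ⟨β, z⟩ ⟨hβ, hz⟩
    obtain rfl : β = α := hβ
    exact hsub hz

lemma exists_disjoint_family :
    ∃ V : Set (Set (X κ)), Cardinal.mk V = κ ∧
      (∀ v ∈ V, IsOpen v ∧ v.Nonempty) ∧
      ∀ u ∈ V, ∀ v ∈ V, u ≠ v → Disjoint u v := by
  refine ⟨Set.range (fun α : D κ => ({α} ×ˢ (Set.univ : Set (ULift.{u} T)) : Set (X κ))), ?_, ?_, ?_⟩
  · have hinj : Function.Injective
        (fun α : D κ => ({α} ×ˢ (Set.univ : Set (ULift.{u} T)) : Set (X κ))) := by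
      intro α β heq
      have heq' : ({α} ×ˢ (Set.univ : Set (ULift.{u} T)) : Set (X κ)) =
          {β} ×ˢ (Set.univ : Set (ULift.{u} T)) := heq
      have h1 : ((α, ULift.up (toT [])) : X κ) ∈ {α} ×ˢ (Set.univ : Set (ULift.{u} T)) :=
        ⟨rfl, trivial⟩
      rw [heq'] at h1
      exact h1.1
    exact (Cardinal.mk_range_eq _ hinj).trans (Cardinal.mk_out κ)
  · rintro v ⟨α, rfl⟩
    exact ⟨(isOpen_discrete _).prod isOpen_univ, ⟨(α, ULift.up (toT [])), rfl, trivial⟩⟩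
  · rintro u ⟨α, rfl⟩ v ⟨β, rfl⟩ hne
    refine Set.disjoint_left.2 ?_
    rintro ⟨γ, z⟩ ⟨hγ1, -⟩ ⟨hγ2, -⟩
    obtain rfl : γ = α := hγ1
    obtain rfl : γ = β := hγ2
    exact hne rfl

end SHD18


/-- For every infinite cardinal `κ` there is a Hausdorff zero-dimensional SHD
space of cardinality `κ` with a π-base of cardinality at most `κ` and a pairwise disjoint
family of `κ`-many nonempty open sets. -/
theorem exists_shd_of_all_cardinalities (κ : Cardinal.{u}) (hκ : Cardinal.aleph0 ≤ κ) :
    ∃ (X : Type u) (t : TopologicalSpace X),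
      @T2Space X t ∧
      @TopologicalSpace.IsTopologicalBasis X t {s : Set X | @IsClopen X t s} ∧
      @SHD X t ∧
      Cardinal.mk X = κ ∧
      (∃ B : Set (Set X), Cardinal.mk B ≤ κ ∧
        (∀ b ∈ B, @IsOpen X t b ∧ b.Nonempty) ∧
        ∀ U : Set X, @IsOpen X t U → U.Nonempty → ∃ b ∈ B, b ⊆ U) ∧
      (∃ V : Set (Set X), Cardinal.mk V = κ ∧
        (∀ v ∈ V, @IsOpen X t v ∧ v.Nonempty) ∧
        ∀ u ∈ V, ∀ v ∈ V, u ≠ v → Disjoint u v) := by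
  refine ⟨SHD18.X κ, inferInstance, inferInstance, SHD18.clopen_basis_X κ, SHD18.SHD_X κ, ?_, ?_, ?_⟩
  · rw [SHD18.mk_X κ, Cardinal.mul_aleph0_eq hκ]
  · have hmk : Cardinal.mk (SHD18.X κ) = κ := by
      rw [SHD18.mk_X κ, Cardinal.mul_aleph0_eq hκ]
    obtain ⟨B, hB1, hB2, hB3⟩ := SHD18.exists_piBase κ
    exact ⟨B, hB1.trans (le_of_eq hmk), hB2, hB3⟩
  · exact SHD18.exists_disjoint_family κ
end
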